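/- arXiv:1807.04571 — 6 statements merged into one kernel-verified Lean document; each statement's English description precedes it below -/
import Mathlib

section
/- For every n ≥ 1, m ∈ ℝ, there exists a constant A₀ > 0 such that for every multi-index γ and every y ∈ ℝⁿ \ {0}: |∂^γ |y|^m| ≤ A₀^{|γ|+1} |γ|! |y|^{m-|γ|}. -/
open Real
open scoped BigOperators

noncomputable section

abbrev E (n : ℕ) := EuclideanSpace ℝ (Fin n)

/-- Partial derivative in the `i`-th coordinate direction. -/
def pd {n : ℕ} (i : Fin n) (f : E n → ℝ) : E n → ℝ :=
  fun x => fderiv ℝ f x (EuclideanSpace.single i 1)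

/-- Multi-index partial derivative `∂^γ`. -/
def mderiv {n : ℕ} (γ : Fin n → ℕ) (f : E n → ℝ) : E n → ℝ :=
  (List.finRange n).foldr (fun i g => (pd i)^[γ i] g) f

/-!
On `ℝⁿ ∖ {0}`, `∂^γ ‖y‖^m` is a finite sum of terms `c y^α ‖y‖^(m - k - |α|)` with `k = |γ|` and
`|α| ≤ k`, because `∂_j (y^α ‖y‖^r) = α_j y^(α - e_j) ‖y‖^r + r y^(α + e_j) ‖y‖^(r - 2)`.
One differentiation multiplies the coefficient mass `∑ |c|` by at most
`α_j + |r| ≤ (|m| + 3)(k + 1)`, so after `k` of them it is at most `(|m| + 3)^k k!`; and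
`|y^α| ≤ ‖y‖^|α|` bounds each term by `|c| ‖y‖^(m - k)`. Hence `A₀ = |m| + 3` works.
-/

open Finset Function

namespace NormRpow

lemma hasFDerivAt_norm_rpow_of_ne_zero {F : Type*} [NormedAddCommGroup F]
    [InnerProductSpace ℝ F] (r : ℝ) {y : F} (hy : y ≠ 0) :
    HasFDerivAt (fun z : F => ‖z‖ ^ r) ((r * ‖y‖ ^ (r - 2)) • innerSL ℝ y) y := by
  convert (hasStrictFDerivAt_norm_sq y).hasFDerivAt.rpow_const (p := r / 2) (by simp [hy])
    using 1
  · funext z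
    rw [← Real.rpow_natCast_mul (norm_nonneg _)]
    ring_nf
  · rw [← Real.rpow_natCast_mul (norm_nonneg _), ← Nat.cast_smul_eq_nsmul ℝ, smul_smul]
    ring_nf

section Weight

variable {ι : Type*}

def weight (L : List (ℝ × (ι → ℕ))) : ℝ := (L.map (|·.1|)).sum

lemma weight_flatMap_le {f : ℝ × (ι → ℕ) → List (ℝ × (ι → ℕ))} {C : ℝ}
    {L : List (ℝ × (ι → ℕ))} (h : ∀ p ∈ L, weight (f p) ≤ C * |p.1|) :
    weight (L.flatMap f) ≤ C * weight L := by
  induction L with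
  | nil => simp [weight]
  | cons p L ih =>
    have hp := h p List.mem_cons_self
    have hL := ih fun q hq => h q (List.mem_cons_of_mem p hq)
    simp only [weight, List.flatMap_cons, List.map_append, List.sum_append,
      List.map_cons, List.sum_cons] at hp hL ⊢
    linarith

end Weight

variable {ι : Type*} [Fintype ι]

def monomial (α : ι → ℕ) (y : EuclideanSpace ℝ ι) : ℝ := ∏ i, y i ^ α i

lemma abs_monomial_le (α : ι → ℕ) (y : EuclideanSpace ℝ ι) :
    |monomial α y| ≤ ‖y‖ ^ ∑ i, α i := by
  rw [monomial, abs_prod, ← prod_pow_eq_pow_sum]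
  gcongr with i
  rw [abs_pow]
  gcongr
  exact (Real.norm_eq_abs _).symm.trans_le (PiLp.norm_apply_le y i)

/-- `c y^α ‖y‖^(m - k - |α|)` for `p = (c, α)`, homogeneous of degree `m - k`. -/
def term (m : ℝ) (k : ℕ) (p : ℝ × (ι → ℕ)) (y : EuclideanSpace ℝ ι) : ℝ :=
  p.1 * (monomial p.2 y * ‖y‖ ^ (m - k - ∑ i, (p.2 i : ℝ)))

lemma abs_term_le (m : ℝ) (k : ℕ) (p : ℝ × (ι → ℕ)) {y : EuclideanSpace ℝ ι} (hy : y ≠ 0) :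
    |term m k p y| ≤ |p.1| * ‖y‖ ^ (m - k) := by
  have hy' : 0 < ‖y‖ := norm_pos_iff.mpr hy
  calc |term m k p y|
      = |p.1| * (|monomial p.2 y| * ‖y‖ ^ (m - k - ∑ i, (p.2 i : ℝ))) := by
        rw [term, abs_mul, abs_mul, abs_of_pos (Real.rpow_pos_of_pos hy' _)]
    _ ≤ |p.1| * (‖y‖ ^ (∑ i, p.2 i) * ‖y‖ ^ (m - k - ∑ i, (p.2 i : ℝ))) := by
        gcongr
        exact abs_monomial_le p.2 y
    _ = |p.1| * ‖y‖ ^ (m - k) := by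
        rw [← Real.rpow_natCast, ← Real.rpow_add hy', Nat.cast_sum]
        ring_nf

def expansion (m : ℝ) (k : ℕ) (L : List (ℝ × (ι → ℕ))) (y : EuclideanSpace ℝ ι) : ℝ :=
  (L.map (term m k · y)).sum

lemma expansion_cons (m : ℝ) (k : ℕ) (p : ℝ × (ι → ℕ)) (L : List (ℝ × (ι → ℕ))) :
    expansion m k (p :: L) = term m k p + expansion m k L := rfl

lemma abs_expansion_le (m : ℝ) (k : ℕ) (L : List (ℝ × (ι → ℕ))) {y : EuclideanSpace ℝ ι}
    (hy : y ≠ 0) : |expansion m k L y| ≤ weight L * ‖y‖ ^ (m - k) := by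
  induction L with
  | nil => simp [expansion, weight]
  | cons p L ih =>
    calc |expansion m k (p :: L) y| ≤ |term m k p y| + |expansion m k L y| := abs_add_le _ _
      _ ≤ |p.1| * ‖y‖ ^ (m - k) + weight L * ‖y‖ ^ (m - k) :=
        add_le_add (abs_term_le m k p hy) ih
      _ = weight (p :: L) * ‖y‖ ^ (m - k) := by simp [weight, add_mul]

def HasExpansion (m : ℝ) (k : ℕ) (g : EuclideanSpace ℝ ι → ℝ) : Prop :=
  ∃ L : List (ℝ × (ι → ℕ)), (∀ y, y ≠ 0 → g y = expansion m k L y) ∧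
    (∀ p ∈ L, ∑ i, p.2 i ≤ k) ∧ weight L ≤ (|m| + 3) ^ k * k.factorial

lemma hasExpansion_norm_rpow (m : ℝ) : HasExpansion m 0 (fun y : EuclideanSpace ℝ ι => ‖y‖ ^ m) :=
  ⟨[(1, 0)], fun y _ => by simp [expansion, term, monomial], by simp, by simp [weight]⟩

lemma HasExpansion.abs_le {m : ℝ} {k : ℕ} {g : EuclideanSpace ℝ ι → ℝ}
    (hg : HasExpansion m k g) {y : EuclideanSpace ℝ ι} (hy : y ≠ 0) :
    |g y| ≤ (|m| + 3) ^ k * k.factorial * ‖y‖ ^ (m - k) := by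
  obtain ⟨L, hgL, -, hweight⟩ := hg
  rw [hgL y hy]
  exact (abs_expansion_le m k L hy).trans (by gcongr)

variable [DecidableEq ι]

lemma monomial_update (α : ι → ℕ) (j : ι) (b : ℕ) (y : EuclideanSpace ℝ ι) :
    monomial (update α j b) y = y j ^ b * ∏ i ∈ univ.erase j, y i ^ α i := by
  rw [monomial, ← mul_prod_erase univ _ (mem_univ j), update_self]
  congr 1
  exact prod_congr rfl fun i hi => by rw [update_of_ne (ne_of_mem_erase hi)]

lemma sum_update_add (α : ι → ℕ) (j : ι) (b : ℕ) :
    ∑ i, update α j b i + α j = ∑ i, α i + b := by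
  rw [sum_update_of_mem (mem_univ j), ← add_sum_erase univ _ (mem_univ j),
    sdiff_singleton_eq_erase]
  ring

lemma cast_sum_update (α : ι → ℕ) (j : ι) (b : ℕ) :
    ((∑ i, update α j b i : ℕ) : ℝ) = ∑ i, (α i : ℝ) - α j + b := by
  have := congrArg (Nat.cast : ℕ → ℝ) (sum_update_add α j b)
  push_cast at this ⊢
  linarith

lemma hasFDerivAt_monomial (α : ι → ℕ) (y : EuclideanSpace ℝ ι) :
    HasFDerivAt (monomial α) (∑ i, (∏ k ∈ univ.erase i, y k ^ α k) •
      ((α i * y i ^ (α i - 1)) • EuclideanSpace.proj (𝕜 := ℝ) i)) y :=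
  HasFDerivAt.finsetProd fun i _ =>
    (hasDerivAt_pow (α i) (y i)).comp_hasFDerivAt y (EuclideanSpace.proj (𝕜 := ℝ) i).hasFDerivAt

lemma fderiv_monomial_single (α : ι → ℕ) (y : EuclideanSpace ℝ ι) (j : ι) :
    fderiv ℝ (monomial α) y (EuclideanSpace.single j 1) =
      α j * monomial (update α j (α j - 1)) y := by
  rw [(hasFDerivAt_monomial α y).fderiv, monomial_update]
  simp only [_root_.sum_apply, smul_apply, PiLp.proj_apply, PiLp.single_apply, smul_eq_mul,
    mul_ite, mul_one, mul_zero, sum_ite_eq', mem_univ, ↓reduceIte]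
  ring

lemma differentiableAt_monomial_mul_norm_rpow (α : ι → ℕ) (r : ℝ) {y : EuclideanSpace ℝ ι}
    (hy : y ≠ 0) : DifferentiableAt ℝ (fun z => monomial α z * ‖z‖ ^ r) y :=
  (hasFDerivAt_monomial α y).differentiableAt.mul
    (hasFDerivAt_norm_rpow_of_ne_zero r hy).differentiableAt

lemma fderiv_monomial_mul_norm_rpow_single (α : ι → ℕ) (r : ℝ) {y : EuclideanSpace ℝ ι}
    (hy : y ≠ 0) (j : ι) :
    fderiv ℝ (fun z => monomial α z * ‖z‖ ^ r) y (EuclideanSpace.single j 1) =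
      α j * monomial (update α j (α j - 1)) y * ‖y‖ ^ r +
        r * monomial (update α j (α j + 1)) y * ‖y‖ ^ (r - 2) := by
  have hnorm := hasFDerivAt_norm_rpow_of_ne_zero r hy
  rw [fderiv_fun_mul (hasFDerivAt_monomial α y).differentiableAt hnorm.differentiableAt,
    hnorm.fderiv]
  have hα : monomial α y = y j ^ α j * ∏ i ∈ univ.erase j, y i ^ α i := by
    simpa using monomial_update α j (α j) y
  simp only [hα, add_apply, smul_apply, coe_innerSL_apply, EuclideanSpace.inner_single_right,
    ringHom_apply, one_mul, smul_eq_mul, fderiv_monomial_single, monomial_update]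
  ring

-- `p.2 j - 1` truncates at `0`, where the coefficient `p.1 * p.2 j` vanishes.
def derivTerms (m : ℝ) (k : ℕ) (j : ι) (p : ℝ × (ι → ℕ)) : List (ℝ × (ι → ℕ)) :=
  [(p.1 * p.2 j, update p.2 j (p.2 j - 1)),
   (p.1 * (m - k - ∑ i, (p.2 i : ℝ)), update p.2 j (p.2 j + 1))]

lemma differentiableAt_term (m : ℝ) (k : ℕ) (p : ℝ × (ι → ℕ)) {y : EuclideanSpace ℝ ι}
    (hy : y ≠ 0) : DifferentiableAt ℝ (term m k p) y :=
  (differentiableAt_monomial_mul_norm_rpow _ _ hy).const_mul _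

lemma fderiv_term_single (m : ℝ) (k : ℕ) (p : ℝ × (ι → ℕ)) {y : EuclideanSpace ℝ ι}
    (hy : y ≠ 0) (j : ι) :
    fderiv ℝ (term m k p) y (EuclideanSpace.single j 1) =
      ((derivTerms m k j p).map (term m (k + 1) · y)).sum := by
  obtain ⟨c, α⟩ := p
  have hlower : c * (α j * monomial (update α j (α j - 1)) y * ‖y‖ ^ (m - k - ∑ i, (α i : ℝ)))
      = term m (k + 1) (c * α j, update α j (α j - 1)) y := by
    rcases Nat.eq_zero_or_pos (α j) with h0 | hpos
    · simp [term, h0]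
    · rw [term, ← Nat.cast_sum, ← Nat.cast_sum, cast_sum_update, Nat.cast_sub hpos]
      push_cast
      ring_nf
  have hraise : c * ((m - k - ∑ i, (α i : ℝ)) * monomial (update α j (α j + 1)) y *
        ‖y‖ ^ (m - k - ∑ i, (α i : ℝ) - 2))
      = term m (k + 1) (c * (m - k - ∑ i, (α i : ℝ)), update α j (α j + 1)) y := by
    rw [term, ← Nat.cast_sum, ← Nat.cast_sum, cast_sum_update]
    push_cast
    ring_nf
  rw [show term m k (c, α) = fun z => c * (monomial α z * ‖z‖ ^ (m - k - ∑ i, (α i : ℝ)))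
      from rfl, fderiv_const_mul (differentiableAt_monomial_mul_norm_rpow _ _ hy),
    smul_apply, fderiv_monomial_mul_norm_rpow_single _ _ hy, smul_eq_mul, mul_add, hlower,
    hraise]
  simp [derivTerms]

lemma differentiableAt_expansion (m : ℝ) (k : ℕ) (L : List (ℝ × (ι → ℕ)))
    {y : EuclideanSpace ℝ ι} (hy : y ≠ 0) : DifferentiableAt ℝ (expansion m k L) y := by
  induction L with
  | nil => exact differentiableAt_const 0
  | cons p L ih => exact (differentiableAt_term m k p hy).add ih

lemma fderiv_expansion_single (m : ℝ) (k : ℕ) (L : List (ℝ × (ι → ℕ)))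
    {y : EuclideanSpace ℝ ι} (hy : y ≠ 0) (j : ι) :
    fderiv ℝ (expansion m k L) y (EuclideanSpace.single j 1) =
      expansion m (k + 1) (L.flatMap (derivTerms m k j)) y := by
  induction L with
  | nil => simp [expansion, show expansion m k [] = fun _ => 0 from rfl]
  | cons p L ih =>
    rw [expansion_cons, fderiv_add (differentiableAt_term m k p hy)
      (differentiableAt_expansion m k L hy), add_apply, ih, fderiv_term_single m k p hy]
    simp [expansion]

lemma weight_derivTerms_le (m : ℝ) {k : ℕ} (j : ι) {p : ℝ × (ι → ℕ)}
    (hp : ∑ i, p.2 i ≤ k) : weight (derivTerms m k j p) ≤ (|m| + 3) * (k + 1) * |p.1| := by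
  have hj : (p.2 j : ℝ) ≤ k := by
    exact_mod_cast (single_le_sum (fun i _ => Nat.zero_le (p.2 i)) (mem_univ j)).trans hp
  have hdeg : (∑ i, (p.2 i : ℝ)) ≤ k := by exact_mod_cast hp
  have hk : (0 : ℝ) ≤ k := k.cast_nonneg
  have hr : |m - k - ∑ i, (p.2 i : ℝ)| ≤ |m| + 2 * k := by
    have : (0 : ℝ) ≤ ∑ i, (p.2 i : ℝ) := by positivity
    rw [abs_le]
    constructor <;> linarith [le_abs_self m, neg_abs_le m]
  simp only [weight, derivTerms, List.map_cons, List.map_nil, List.sum_cons, List.sum_nil,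
    add_zero, abs_mul, Nat.abs_cast]
  calc |p.1| * p.2 j + |p.1| * |m - k - ∑ i, (p.2 i : ℝ)|
      ≤ |p.1| * k + |p.1| * (|m| + 2 * k) := by gcongr
    _ ≤ (|m| + 3) * (k + 1) * |p.1| := by
      nlinarith [abs_nonneg p.1, mul_nonneg (abs_nonneg p.1) (mul_nonneg (abs_nonneg m) hk)]

lemma sum_le_of_mem_derivTerms (m : ℝ) (k : ℕ) (j : ι) {p q : ℝ × (ι → ℕ)}
    (hq : q ∈ derivTerms m k j p) : ∑ i, q.2 i ≤ ∑ i, p.2 i + 1 := by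
  simp only [derivTerms, List.mem_cons, List.not_mem_nil, or_false] at hq
  rcases hq with rfl | rfl
  · have := sum_update_add p.2 j (p.2 j - 1)
    dsimp only
    omega
  · have := sum_update_add p.2 j (p.2 j + 1)
    dsimp only
    omega

lemma HasExpansion.fderiv_single {m : ℝ} {k : ℕ} {g : EuclideanSpace ℝ ι → ℝ}
    (hg : HasExpansion m k g) (j : ι) :
    HasExpansion m (k + 1) (fun y => fderiv ℝ g y (EuclideanSpace.single j 1)) := by
  obtain ⟨L, hgL, hdeg, hweight⟩ := hg
  refine ⟨L.flatMap (derivTerms m k j), fun y hy => ?_, ?_, ?_⟩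
  · have hev : g =ᶠ[nhds y] expansion m k L :=
      Filter.eventuallyEq_of_mem (isOpen_ne.mem_nhds hy) hgL
    dsimp only
    rw [hev.fderiv_eq, fderiv_expansion_single m k L hy]
  · simp only [List.mem_flatMap]
    rintro q ⟨p, hp, hq⟩
    exact (sum_le_of_mem_derivTerms m k j hq).trans (Nat.add_le_add_right (hdeg p hp) 1)
  · calc weight (L.flatMap (derivTerms m k j))
        ≤ (|m| + 3) * (k + 1) * weight L :=
          weight_flatMap_le fun p hp => weight_derivTerms_le m j (hdeg p hp)
      _ ≤ (|m| + 3) * (k + 1) * ((|m| + 3) ^ k * k.factorial) := by gcongr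
      _ = (|m| + 3) ^ (k + 1) * (k + 1).factorial := by
          rw [Nat.factorial_succ]
          push_cast
          ring

lemma HasExpansion.mderiv {n : ℕ} {m : ℝ} {g : E n → ℝ} (hg : HasExpansion m 0 g)
    (γ : Fin n → ℕ) : HasExpansion m (∑ i, γ i) (mderiv γ g) := by
  suffices ∀ l : List (Fin n),
      HasExpansion m (l.map γ).sum (l.foldr (fun i g => (pd i)^[γ i] g) g) by
    simpa [_root_.mderiv, Fin.sum_univ_def] using this (List.finRange n)
  intro l
  induction l with
  | nil => simpa using hg
  | cons i l ih =>
    rw [List.foldr_cons, List.map_cons, List.sum_cons, add_comm]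
    induction γ i with
    | zero => exact ih
    | succ s ihs =>
      rw [iterate_succ_apply']
      exact ihs.fderiv_single i

end NormRpow

theorem stmt2_general (n : ℕ) (m : ℝ) :
    ∃ A₀ : ℝ, 0 < A₀ ∧ ∀ (γ : Fin n → ℕ) (y : E n), y ≠ 0 →
      |mderiv γ (fun z => ‖z‖ ^ m) y| ≤
        A₀ ^ (∑ i, γ i + 1) * (Nat.factorial (∑ i, γ i) : ℝ) *
          ‖y‖ ^ (m - (∑ i, γ i : ℝ)) := by
  refine ⟨|m| + 3, by positivity, fun γ y hy => ?_⟩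
  calc |mderiv γ (fun z => ‖z‖ ^ m) y|
      ≤ (|m| + 3) ^ (∑ i, γ i) * (∑ i, γ i).factorial * ‖y‖ ^ (m - (∑ i, γ i : ℕ)) :=
        ((NormRpow.hasExpansion_norm_rpow m).mderiv γ).abs_le hy
    _ ≤ (|m| + 3) ^ (∑ i, γ i + 1) * (∑ i, γ i).factorial * ‖y‖ ^ (m - (∑ i, γ i : ℕ)) := by
        gcongr
        · linarith [abs_nonneg m]
        · omega
    _ = _ := by push_cast; rfl

theorem stmt2 (n : ℕ) (hn : 1 ≤ n) (m : ℝ) :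
    ∃ A₀ : ℝ, 0 < A₀ ∧ ∀ (γ : Fin n → ℕ) (y : E n), y ≠ 0 →
      |mderiv γ (fun z => ‖z‖ ^ m) y| ≤
        A₀ ^ (∑ i, γ i + 1) * (Nat.factorial (∑ i, γ i) : ℝ) *
          ‖y‖ ^ (m - (∑ i, γ i : ℝ)) :=
  stmt2_general n m
end
end

section
/- Let ω = ξ/|ξ| for ξ ∈ ℝⁿ \ {0}. There exists a constant A₀ > 0 such that for all multi-indices α and all ξ ≠ 0 and 1 ≤ j ≤ n: |∂_ξ^α ω_j| ≤ 2 A₀^{|α|+1} |α|! |ξ|^{-|α|}. -/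
open Real
open scoped BigOperators

noncomputable section

/-!
Induction on `|α|` shows that, off the origin, `∂^α ω_j = P(ξ) / |ξ|^(2|α|+1)` with `P` a
homogeneous polynomial of degree `|α| + 1`: differentiating `P / |ξ|^(2k+1)` in `ξ_i` gives
`(∂_i P · |ξ|² - (2k+1) ξ_i P) / |ξ|^(2k+3)`. Each such step multiplies the `ℓ¹` norm of the
coefficients by at most `(n + 2)(k + 1)`, so it stays below `(n + 2)^k k!`, and a homogeneous
polynomial of degree `d` is bounded by that norm times `|ξ|^d`. Hence
`|∂^α ω_j| ≤ (n + 2)^|α| |α|! |ξ|^(-|α|)`, and `A₀ = n + 2` works.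
-/

open MvPolynomial
open scoped Nat

namespace MvPolynomial

section SumAbsCoeff

variable {σ : Type*}

def sumAbsCoeff (P : MvPolynomial σ ℝ) : ℝ := ∑ m ∈ P.support, |P.coeff m|

lemma sumAbsCoeff_eq_of_support_subset {P : MvPolynomial σ ℝ} {s : Finset (σ →₀ ℕ)}
    (h : P.support ⊆ s) : sumAbsCoeff P = ∑ m ∈ s, |P.coeff m| :=
  Finset.sum_subset h fun m _ hm => by simp [notMem_support_iff.mp hm]

lemma sumAbsCoeff_nonneg (P : MvPolynomial σ ℝ) : 0 ≤ sumAbsCoeff P :=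
  Finset.sum_nonneg fun _ _ => abs_nonneg _

lemma sumAbsCoeff_add_le (P Q : MvPolynomial σ ℝ) :
    sumAbsCoeff (P + Q) ≤ sumAbsCoeff P + sumAbsCoeff Q := by
  classical
  rw [sumAbsCoeff_eq_of_support_subset support_add,
    sumAbsCoeff_eq_of_support_subset (Finset.subset_union_left (s₂ := Q.support)),
    sumAbsCoeff_eq_of_support_subset (Finset.subset_union_right (s₁ := P.support)),
    ← Finset.sum_add_distrib]
  exact Finset.sum_le_sum fun m _ => by simpa only [coeff_add] using abs_add_le _ _

lemma sumAbsCoeff_neg (P : MvPolynomial σ ℝ) : sumAbsCoeff (-P) = sumAbsCoeff P := by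
  simp [sumAbsCoeff, support_neg]

lemma sumAbsCoeff_sub_le (P Q : MvPolynomial σ ℝ) :
    sumAbsCoeff (P - Q) ≤ sumAbsCoeff P + sumAbsCoeff Q := by
  simpa only [sub_eq_add_neg, sumAbsCoeff_neg] using sumAbsCoeff_add_le P (-Q)

lemma sumAbsCoeff_sum_le {ι : Type*} (s : Finset ι) (P : ι → MvPolynomial σ ℝ) :
    sumAbsCoeff (∑ i ∈ s, P i) ≤ ∑ i ∈ s, sumAbsCoeff (P i) :=
  Finset.le_sum_of_subadditive _ (by simp [sumAbsCoeff]) sumAbsCoeff_add_le s P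

lemma sumAbsCoeff_monomial_le (s : σ →₀ ℕ) (a : ℝ) : sumAbsCoeff (monomial s a) ≤ |a| := by
  classical
  rw [sumAbsCoeff_eq_of_support_subset support_monomial_subset]
  simp

lemma sumAbsCoeff_C_mul_le (a : ℝ) (P : MvPolynomial σ ℝ) :
    sumAbsCoeff (C a * P) ≤ |a| * sumAbsCoeff P := by
  rw [C_mul', sumAbsCoeff_eq_of_support_subset support_smul, sumAbsCoeff, Finset.mul_sum]
  simp [abs_mul]

lemma sumAbsCoeff_mul_X (P : MvPolynomial σ ℝ) (i : σ) :
    sumAbsCoeff (P * X i) = sumAbsCoeff P := by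
  classical
  simp [sumAbsCoeff, support_mul_X, coeff_mul_X]

lemma sumAbsCoeff_mul_sum_X_sq_le [Fintype σ] (P : MvPolynomial σ ℝ) :
    sumAbsCoeff (P * ∑ l, X l ^ 2) ≤ Fintype.card σ * sumAbsCoeff P := by
  rw [Finset.mul_sum]
  refine (sumAbsCoeff_sum_le _ _).trans_eq ?_
  simp [sq, ← mul_assoc, sumAbsCoeff_mul_X]

lemma IsHomogeneous.degree_eq_of_mem_support {R : Type*} [CommSemiring R]
    {P : MvPolynomial σ R} {d : ℕ} (hP : P.IsHomogeneous d) {m : σ →₀ ℕ} (hm : m ∈ P.support) :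
    m.degree = d := by
  rw [Finsupp.degree_eq_weight_one]
  exact hP (mem_support_iff.mp hm)

lemma sumAbsCoeff_pderiv_le {P : MvPolynomial σ ℝ} {d : ℕ} (hP : P.IsHomogeneous d) (i : σ) :
    sumAbsCoeff (pderiv i P) ≤ d * sumAbsCoeff P := by
  conv_lhs => rw [P.as_sum, map_sum]
  refine (sumAbsCoeff_sum_le _ _).trans ?_
  rw [sumAbsCoeff, Finset.mul_sum]
  refine Finset.sum_le_sum fun m hm => ?_
  rw [pderiv_monomial]
  refine (sumAbsCoeff_monomial_le _ _).trans ?_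
  have hmi : (m i : ℝ) ≤ d := by
    exact_mod_cast hP.degree_eq_of_mem_support hm ▸ Finsupp.le_degree i m
  rw [abs_mul, Nat.abs_cast, mul_comm]
  exact mul_le_mul_of_nonneg_right hmi (abs_nonneg _)

end SumAbsCoeff

section Euclidean

variable {ι : Type*} [Fintype ι]

lemma abs_eval_le {P : MvPolynomial ι ℝ} {d : ℕ} (hP : P.IsHomogeneous d)
    (x : EuclideanSpace ℝ ι) : |eval x.ofLp P| ≤ sumAbsCoeff P * ‖x‖ ^ d := by
  rw [eval_eq', sumAbsCoeff, Finset.sum_mul]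
  refine (Finset.abs_sum_le_sum_abs _ _).trans (Finset.sum_le_sum fun m hm => ?_)
  rw [abs_mul, Finset.abs_prod]
  gcongr
  calc ∏ i, |x.ofLp i ^ m i| ≤ ∏ i, ‖x‖ ^ m i := by
        gcongr with i
        rw [abs_pow]
        gcongr
        exact PiLp.norm_apply_le x i
    _ = ‖x‖ ^ d := by
        rw [Finset.prod_pow_eq_pow_sum, ← Finsupp.degree_eq_sum, hP.degree_eq_of_mem_support hm]

lemma hasFDerivAt_eval_euclidean [DecidableEq ι] (P : MvPolynomial ι ℝ)
    (x : EuclideanSpace ℝ ι) :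
    HasFDerivAt (fun y : EuclideanSpace ℝ ι => eval y.ofLp P)
      (∑ i, eval x.ofLp (pderiv i P) • EuclideanSpace.proj (𝕜 := ℝ) i) x := by
  induction P using MvPolynomial.induction_on with
  | C a => simpa [pderiv_C] using hasFDerivAt_const a x
  | add P Q hP hQ =>
    simp only [map_add, add_smul, Finset.sum_add_distrib]
    exact hP.add hQ
  | mul_X P j hP =>
    simp only [map_mul, eval_X]
    refine (hP.mul (EuclideanSpace.proj (𝕜 := ℝ) j).hasFDerivAt).congr_fderiv ?_
    ext v
    simp [Pi.single_apply, add_mul, Finset.sum_add_distrib, Finset.mul_sum, apply_ite, ite_mul,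
      mul_assoc]

end Euclidean

end MvPolynomial

lemma hasFDerivAt_norm_of_ne_zero {F : Type*} [NormedAddCommGroup F] [InnerProductSpace ℝ F]
    {x : F} (hx : x ≠ 0) : HasFDerivAt (‖·‖) (‖x‖⁻¹ • innerSL ℝ x) x := by
  have h := (hasStrictFDerivAt_norm_sq x).hasFDerivAt.sqrt (by positivity)
  simp only [Real.sqrt_sq (norm_nonneg _)] at h
  refine h.congr_fderiv ?_
  ext v
  simp
  field_simp

section Quotient

variable {n : ℕ}

def pderivNumerator (i : Fin n) (k : ℕ) (P : MvPolynomial (Fin n) ℝ) : MvPolynomial (Fin n) ℝ :=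
  pderiv i P * ∑ l, X l ^ 2 - C (2 * k + 1 : ℝ) * (P * X i)

lemma pd_eval_div_norm_pow (i : Fin n) (k : ℕ) (P : MvPolynomial (Fin n) ℝ) {ξ : E n}
    (hξ : ξ ≠ 0) :
    pd i (fun x => eval x.ofLp P / ‖x‖ ^ (2 * k + 1)) ξ
      = eval ξ.ofLp (pderivNumerator i k P) / ‖ξ‖ ^ (2 * (k + 1) + 1) := by
  have hξ' : ‖ξ‖ ≠ 0 := norm_ne_zero_iff.mpr hξ
  have hinv : HasFDerivAt (𝕜 := ℝ) (fun x : E n => (‖x‖ ^ (2 * k + 1))⁻¹) _ ξ :=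
    ((hasDerivAt_pow (2 * k + 1) ‖ξ‖).inv (pow_ne_zero _ hξ')).comp_hasFDerivAt ξ
      (hasFDerivAt_norm_of_ne_zero hξ)
  have h := (hasFDerivAt_eval_euclidean P ξ).mul hinv
  have hfun : (fun x : E n => eval x.ofLp P / ‖x‖ ^ (2 * k + 1))
      = (fun x : E n => eval x.ofLp P) * fun x : E n => (‖x‖ ^ (2 * k + 1))⁻¹ := by
    funext x; simp [div_eq_mul_inv]
  rw [pd, hfun, h.fderiv]
  simp [pderivNumerator, EuclideanSpace.inner_single_right, ← EuclideanSpace.real_norm_sq_eq]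
  field_simp
  ring

lemma isHomogeneous_pderivNumerator {P : MvPolynomial (Fin n) ℝ} {k : ℕ}
    (hP : P.IsHomogeneous (k + 1)) (i : Fin n) :
    (pderivNumerator i k P).IsHomogeneous (k + 2) :=
  (hP.pderiv.mul (IsHomogeneous.sum _ _ _ fun l _ => isHomogeneous_X_pow l 2)).sub
    ((hP.mul (isHomogeneous_X ℝ i)).C_mul _)

lemma sumAbsCoeff_pderivNumerator_le {P : MvPolynomial (Fin n) ℝ} {k : ℕ}
    (hP : P.IsHomogeneous (k + 1)) (i : Fin n) :
    sumAbsCoeff (pderivNumerator i k P) ≤ (n + 2) * (k + 1) * sumAbsCoeff P := by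
  have hfirst : sumAbsCoeff (pderiv i P * ∑ l, X l ^ 2) ≤ n * ((k + 1) * sumAbsCoeff P) := by
    refine (sumAbsCoeff_mul_sum_X_sq_le _).trans ?_
    rw [Fintype.card_fin]
    gcongr
    exact_mod_cast sumAbsCoeff_pderiv_le hP i
  have hsecond : sumAbsCoeff (C (2 * k + 1 : ℝ) * (P * X i)) ≤ (2 * k + 1) * sumAbsCoeff P := by
    refine (sumAbsCoeff_C_mul_le _ _).trans_eq ?_
    rw [sumAbsCoeff_mul_X, abs_of_nonneg (by positivity)]
  calc sumAbsCoeff (pderivNumerator i k P)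
      ≤ n * ((k + 1) * sumAbsCoeff P) + (2 * k + 1) * sumAbsCoeff P :=
        (sumAbsCoeff_sub_le _ _).trans (add_le_add hfirst hsecond)
    _ ≤ (n + 2) * (k + 1) * sumAbsCoeff P := by nlinarith [sumAbsCoeff_nonneg P]

def IsHomogeneousQuotient (k : ℕ) (B : ℝ) (f : E n → ℝ) : Prop :=
  ∃ P : MvPolynomial (Fin n) ℝ, P.IsHomogeneous (k + 1) ∧ sumAbsCoeff P ≤ B ∧
    ∀ ξ, ξ ≠ 0 → f ξ = eval ξ.ofLp P / ‖ξ‖ ^ (2 * k + 1)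

namespace IsHomogeneousQuotient

lemma coord_div_norm (j : Fin n) :
    IsHomogeneousQuotient 0 1 (fun ζ : E n => ζ j / ‖ζ‖) :=
  ⟨X j, isHomogeneous_X ℝ j, (sumAbsCoeff_monomial_le _ _).trans_eq abs_one,
    fun ξ _ => by simp⟩

lemma pd {k : ℕ} {B : ℝ} {f : E n → ℝ} (hf : IsHomogeneousQuotient k B f) (i : Fin n) :
    IsHomogeneousQuotient (k + 1) ((n + 2) * (k + 1) * B) (pd i f) := by
  obtain ⟨P, hP, hPB, hfP⟩ := hf
  refine ⟨pderivNumerator i k P, isHomogeneous_pderivNumerator hP i,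
    (sumAbsCoeff_pderivNumerator_le hP i).trans (by gcongr), fun ξ hξ => ?_⟩
  have hloc : f =ᶠ[nhds ξ] fun x => eval x.ofLp P / ‖x‖ ^ (2 * k + 1) :=
    Filter.eventually_of_mem (isOpen_compl_singleton.mem_nhds hξ) hfP
  rw [← pd_eval_div_norm_pow i k P hξ, _root_.pd, _root_.pd, hloc.fderiv_eq]

lemma iterate_pd {k : ℕ} {f : E n → ℝ}
    (hf : IsHomogeneousQuotient k ((n + 2) ^ k * k !) f) (i : Fin n) (m : ℕ) :
    IsHomogeneousQuotient (k + m) ((n + 2) ^ (k + m) * (k + m)!) ((_root_.pd i)^[m] f) := by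
  induction m with
  | zero => simpa using hf
  | succ m ih =>
    rw [Function.iterate_succ_apply', ← add_assoc]
    have h := ih.pd i
    rwa [show ((n : ℝ) + 2) * (↑(k + m) + 1) * ((n + 2) ^ (k + m) * (k + m)!)
        = (n + 2) ^ (k + m + 1) * (k + m + 1)! by push_cast [Nat.factorial_succ]; ring] at h

lemma mderiv {f : E n → ℝ} (hf : IsHomogeneousQuotient 0 1 f) (α : Fin n → ℕ) :
    IsHomogeneousQuotient (∑ i, α i) ((n + 2) ^ (∑ i, α i) * (∑ i, α i)!) (mderiv α f) := by
  suffices ∀ l : List (Fin n), IsHomogeneousQuotient (l.map α).sum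
      ((n + 2) ^ (l.map α).sum * (l.map α).sum !) (l.foldr (fun i g => (_root_.pd i)^[α i] g) f) by
    simpa [_root_.mderiv, Fin.sum_univ_def] using this (List.finRange n)
  intro l
  induction l with
  | nil => simpa using hf
  | cons i l ih => simpa [add_comm] using ih.iterate_pd i (α i)

lemma abs_le {k : ℕ} {B : ℝ} {f : E n → ℝ} (hf : IsHomogeneousQuotient k B f) {ξ : E n}
    (hξ : ξ ≠ 0) : |f ξ| ≤ B / ‖ξ‖ ^ k := by
  obtain ⟨P, hP, hPB, hfP⟩ := hf
  have hξ' : 0 < ‖ξ‖ := norm_pos_iff.mpr hξ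
  rw [hfP ξ hξ, abs_div, abs_of_pos (pow_pos hξ' _),
    div_le_div_iff₀ (by positivity) (by positivity)]
  calc |eval ξ.ofLp P| * ‖ξ‖ ^ k ≤ sumAbsCoeff P * ‖ξ‖ ^ (k + 1) * ‖ξ‖ ^ k := by
        gcongr; exact abs_eval_le hP ξ
    _ ≤ B * ‖ξ‖ ^ (2 * k + 1) := by
        rw [mul_assoc, ← pow_add, show k + 1 + k = 2 * k + 1 by ring]
        gcongr

end IsHomogeneousQuotient

end Quotient

theorem stmt4_general (n : ℕ) :
    ∃ A₀ : ℝ, 0 < A₀ ∧ ∀ (α : Fin n → ℕ) (ξ : E n), ξ ≠ 0 → ∀ j : Fin n,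
      |mderiv α (fun ζ => ζ j / ‖ζ‖) ξ| ≤
        2 * A₀ ^ (∑ i, α i + 1) * (Nat.factorial (∑ i, α i) : ℝ) *
          ‖ξ‖ ^ (-(∑ i, α i : ℝ)) := by
  refine ⟨n + 2, by positivity, fun α ξ hξ j => ?_⟩
  have hbound := ((IsHomogeneousQuotient.coord_div_norm j).mderiv α).abs_le hξ
  have hA : (1 : ℝ) ≤ n + 2 := by linarith [(n.cast_nonneg : (0 : ℝ) ≤ n)]
  refine hbound.trans ?_
  rw [← Nat.cast_sum, Real.rpow_neg (norm_nonneg ξ), Real.rpow_natCast, div_eq_mul_inv]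
  gcongr
  calc ((n : ℝ) + 2) ^ (∑ i, α i) ≤ (n + 2) ^ (∑ i, α i + 1) := pow_le_pow_right₀ hA (by omega)
    _ ≤ 2 * (n + 2) ^ (∑ i, α i + 1) := le_mul_of_one_le_left (by positivity) one_le_two

theorem stmt4 (n : ℕ) (hn : 1 ≤ n) :
    ∃ A₀ : ℝ, 0 < A₀ ∧ ∀ (α : Fin n → ℕ) (ξ : E n), ξ ≠ 0 → ∀ j : Fin n,
      |mderiv α (fun ζ => ζ j / ‖ζ‖) ξ| ≤
        2 * A₀ ^ (∑ i, α i + 1) * (Nat.factorial (∑ i, α i) : ℝ) *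
          ‖ξ‖ ^ (-(∑ i, α i : ℝ)) :=
  stmt4_general n
end
end

section
/- There exists a constant A₀ > 0 such that for all multi-indices α, β with |β| ≤ 1, all x ∈ ℝⁿ and ξ ∈ ℝⁿ \ {0}: |∂_ξ^α ∂_x^β (x·ω)| ≤ A₀^{|α|+|β|+1} |α|! |β|! |x|^{1-|β|} |ξ|^{-|α|}, where ω = ξ/|ξ|; moreover ∂_x^β (x·ω) = 0 whenever |β| ≥ 2. -/
open Real
open scoped RealInnerProductSpace BigOperators

noncomputable section

/-- Partial derivative in the `i`-th `x`-coordinate direction. -/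
def pdx {n : ℕ} (i : Fin n) (f : E n × E n → ℝ) : E n × E n → ℝ :=
  fun p => fderiv ℝ (fun x => f (x, p.2)) p.1 (EuclideanSpace.single i 1)

/-- Partial derivative in the `i`-th `ξ`-coordinate direction. -/
def pdxi {n : ℕ} (i : Fin n) (f : E n × E n → ℝ) : E n × E n → ℝ :=
  fun p => fderiv ℝ (fun ξ => f (p.1, ξ)) p.2 (EuclideanSpace.single i 1)

/-- Multi-index derivative `∂_x^β`. -/
def mderivX {n : ℕ} (β : Fin n → ℕ) (f : E n × E n → ℝ) : E n × E n → ℝ :=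
  (List.finRange n).foldr (fun i g => (pdx i)^[β i] g) f

/-- Multi-index derivative `∂_ξ^α`. -/
def mderivXi {n : ℕ} (α : Fin n → ℕ) (f : E n × E n → ℝ) : E n × E n → ℝ :=
  (List.finRange n).foldr (fun i g => (pdxi i)^[α i] g) f

/-!
Since `⟪x, ξ⟫ / ‖ξ‖` is linear in `x`, a first-order `x`-derivative replaces `x` by a basis vector
and higher ones vanish; what remains is to differentiate `ξ ↦ ⟪c, ξ⟫ / ‖ξ‖` in `ξ`.

Call `c * ∏ ⟪aⱼ, ξ⟫ / ‖ξ‖ ^ m` a monomial of order `k` if it is homogeneous of degree `-k`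
(`m = #factors + k`) and has at most `k + 1` factors, and call `|c| * ∏ ‖aⱼ‖` its weight.
Differentiating in a direction of norm at most one turns a monomial of order `k` into a sum of
monomials of order `k + 1` (the Leibniz rule on the factors, plus one term from `‖ξ‖ ^ (-m)`),
of total weight at most `#factors + m ≤ 3 (k + 1)` times the old one. After `k` derivatives the
total weight is therefore at most `3 ^ k k! ‖c‖`, while homogeneity bounds each monomial of order
`k` by its weight times `‖ξ‖ ^ (-k)`. So `A₀ = 3` works.
-/

open scoped Nat

section

def dirDeriv {V : Type*} [NormedAddCommGroup V] [NormedSpace ℝ V] (v : V) (g : V → ℝ) : V → ℝ :=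
  fun ξ => fderiv ℝ g ξ v

def removals {α : Type*} : List α → List (α × List α)
  | [] => []
  | a :: l => (a, l) :: (removals l).map fun q => (q.1, a :: q.2)

theorem length_removals {α : Type*} (l : List α) : (removals l).length = l.length := by
  induction l with
  | nil => rfl
  | cons a l ih => simp [removals, ih]

theorem perm_of_mem_removals {α : Type*} {l : List α} {q : α × List α} (hq : q ∈ removals l) :
    (q.1 :: q.2).Perm l := by
  induction l generalizing q with
  | nil => simp [removals] at hq
  | cons a l ih =>
    simp only [removals, List.mem_cons, List.mem_map] at hq
    rcases hq with rfl | ⟨q, hq, rfl⟩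
    · exact List.Perm.refl _
    · exact (List.Perm.swap a q.1 q.2).trans ((ih hq).cons a)

structure RadialMonomial (F : Type*) where
  coeff : ℝ
  factors : List F
  exp : ℕ

variable {F : Type*} [NormedAddCommGroup F]

theorem prod_map_norm_nonneg (l : List F) : 0 ≤ (l.map fun a => ‖a‖).prod :=
  List.prod_nonneg fun _ ha => by
    obtain ⟨a, -, rfl⟩ := List.mem_map.mp ha
    exact norm_nonneg a

namespace RadialMonomial

def weight (t : RadialMonomial F) : ℝ := |t.coeff| * (t.factors.map fun a => ‖a‖).prod

def weightSum (R : List (RadialMonomial F)) : ℝ := (R.map weight).sum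

theorem weight_nonneg (t : RadialMonomial F) : 0 ≤ t.weight :=
  mul_nonneg (abs_nonneg _) (prod_map_norm_nonneg _)

end RadialMonomial

variable [InnerProductSpace ℝ F]

def prodInner (l : List F) (ξ : F) : ℝ := (l.map fun a => ⟪a, ξ⟫).prod

theorem prodInner_cons (a : F) (l : List F) (ξ : F) :
    prodInner (a :: l) ξ = ⟪a, ξ⟫ * prodInner l ξ := List.prod_cons

theorem abs_prodInner_le (l : List F) (ξ : F) :
    |prodInner l ξ| ≤ (l.map fun a => ‖a‖).prod * ‖ξ‖ ^ l.length := by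
  induction l with
  | nil => simp [prodInner]
  | cons a l ih =>
    rw [prodInner_cons, abs_mul, List.map_cons, List.prod_cons, List.length_cons, pow_succ]
    calc |⟪a, ξ⟫| * |prodInner l ξ|
        ≤ (‖a‖ * ‖ξ‖) * ((l.map fun a => ‖a‖).prod * ‖ξ‖ ^ l.length) :=
          mul_le_mul (abs_real_inner_le_norm a ξ) ih (abs_nonneg _) (by positivity)
      _ = _ := by ring

theorem hasFDerivAt_prodInner (l : List F) (ξ : F) :
    ∃ D : F →L[ℝ] ℝ, HasFDerivAt (prodInner l) D ξ ∧
      ∀ v, D v = ((removals l).map fun q => ⟪q.1, v⟫ * prodInner q.2 ξ).sum := by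
  induction l with
  | nil => exact ⟨0, hasFDerivAt_const (1 : ℝ) ξ, fun v => by simp [removals]⟩
  | cons a l ih =>
    obtain ⟨D, hD, hDv⟩ := ih
    have hprod : prodInner (a :: l) = (fun ξ => ⟪a, ξ⟫) * prodInner l :=
      funext fun ξ => prodInner_cons a l ξ
    refine ⟨_, hprod ▸ (innerSL ℝ a).hasFDerivAt.mul hD, fun v => ?_⟩
    simp only [add_apply, smul_apply, smul_eq_mul, innerSL_apply_apply, hDv, removals,
      List.map_cons, List.sum_cons, List.map_map, Function.comp_def, prodInner_cons]
    rw [← List.sum_map_mul_left]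
    simp only [mul_left_comm ⟪a, ξ⟫]
    ring

theorem hasFDerivAt_norm {ξ : F} (hξ : ξ ≠ 0) :
    HasFDerivAt (‖·‖) (‖ξ‖⁻¹ • innerSL ℝ ξ) ξ := by
  have hsqrt := (Real.hasDerivAt_sqrt (pow_pos (norm_pos_iff.mpr hξ) 2).ne').comp_hasFDerivAt ξ
    (hasStrictFDerivAt_norm_sq ξ).hasFDerivAt
  simp only [Function.comp_def, Real.sqrt_sq (norm_nonneg _)] at hsqrt
  refine hsqrt.congr_fderiv ?_
  ext v
  simp only [smul_apply, smul_eq_mul, nsmul_eq_mul, Nat.cast_ofNat, innerSL_apply_apply]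
  field_simp

theorem hasFDerivAt_inv_norm_pow (m : ℕ) {ξ : F} (hξ : ξ ≠ 0) :
    ∃ D : F →L[ℝ] ℝ, HasFDerivAt (fun ξ : F => (‖ξ‖ ^ m)⁻¹) D ξ ∧
      ∀ v, D v = -m * ⟪v, ξ⟫ * (‖ξ‖ ^ (m + 2))⁻¹ := by
  refine ⟨_, ((hasDerivAt_pow m ‖ξ‖).inv (pow_ne_zero m (norm_ne_zero_iff.mpr hξ))).comp_hasFDerivAt
    ξ (hasFDerivAt_norm hξ), fun v => ?_⟩
  simp only [smul_apply, smul_eq_mul, innerSL_apply_apply, real_inner_comm ξ v]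
  rcases m with _ | m
  · simp
  · simp only [Nat.add_sub_cancel]
    field_simp
    ring

namespace RadialMonomial

def eval (t : RadialMonomial F) (ξ : F) : ℝ := t.coeff * prodInner t.factors ξ * (‖ξ‖ ^ t.exp)⁻¹

def evalSum (R : List (RadialMonomial F)) (ξ : F) : ℝ := (R.map fun t => t.eval ξ).sum

def deriv (v : F) (t : RadialMonomial F) : List (RadialMonomial F) :=
  (removals t.factors).map (fun q => ⟨t.coeff * ⟪q.1, v⟫, q.2, t.exp⟩) ++
    [⟨-t.exp * t.coeff, v :: t.factors, t.exp + 2⟩]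

def IsOfOrder (k : ℕ) (t : RadialMonomial F) : Prop :=
  t.exp = t.factors.length + k ∧ t.factors.length ≤ k + 1

theorem hasFDerivAt_eval (t : RadialMonomial F) {ξ : F} (hξ : ξ ≠ 0) :
    ∃ D : F →L[ℝ] ℝ, HasFDerivAt t.eval D ξ ∧ ∀ v, D v = evalSum (t.deriv v) ξ := by
  obtain ⟨P, hP, hPv⟩ := hasFDerivAt_prodInner t.factors ξ
  obtain ⟨Q, hQ, hQv⟩ := hasFDerivAt_inv_norm_pow t.exp hξ
  refine ⟨_, (hP.const_mul t.coeff).mul hQ, fun v => ?_⟩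
  simp only [smul_apply, add_apply, smul_eq_mul, hPv, hQv, evalSum, deriv, List.map_append,
    List.sum_append, List.map_map, Function.comp_def, eval, List.map_cons, List.map_nil,
    List.sum_cons, List.sum_nil, prodInner_cons]
  rw [← List.sum_map_mul_left, ← List.sum_map_mul_left, add_comm]
  congr 1
  · exact congrArg List.sum (List.map_congr_left fun q _ => by ring)
  · ring

theorem hasFDerivAt_evalSum (R : List (RadialMonomial F)) {ξ : F} (hξ : ξ ≠ 0) :
    ∃ D : F →L[ℝ] ℝ, HasFDerivAt (evalSum R) D ξ ∧
      ∀ v, D v = evalSum (R.flatMap (deriv v)) ξ := by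
  induction R with
  | nil => exact ⟨0, hasFDerivAt_const (0 : ℝ) ξ, fun v => by simp [evalSum]⟩
  | cons t R ih =>
    obtain ⟨D, hD, hDv⟩ := ih
    obtain ⟨Dt, hDt, hDtv⟩ := t.hasFDerivAt_eval hξ
    have hsum : evalSum (t :: R) = fun ξ => t.eval ξ + evalSum R ξ :=
      funext fun ξ => List.sum_cons
    refine ⟨Dt + D, hsum ▸ hDt.add hD, fun v => ?_⟩
    simp only [add_apply, hDtv, hDv, List.flatMap_cons, evalSum, List.map_append, List.sum_append]

theorem weight_le_of_mem_removals {v : F} (hv : ‖v‖ ≤ 1) (t : RadialMonomial F)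
    {q : F × List F} (hq : q ∈ removals t.factors) :
    weight (⟨t.coeff * ⟪q.1, v⟫, q.2, t.exp⟩ : RadialMonomial F) ≤ t.weight := by
  have hperm := ((perm_of_mem_removals hq).map fun a => ‖a‖).prod_eq
  rw [List.map_cons, List.prod_cons] at hperm
  rw [weight, weight, ← hperm, abs_mul, mul_assoc]
  gcongr
  · exact prod_map_norm_nonneg _
  · calc |⟪q.1, v⟫| ≤ ‖q.1‖ * ‖v‖ := abs_real_inner_le_norm _ _
      _ ≤ ‖q.1‖ := mul_le_of_le_one_right (norm_nonneg _) hv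

theorem weightSum_deriv_le {v : F} (hv : ‖v‖ ≤ 1) (t : RadialMonomial F) :
    weightSum (t.deriv v) ≤ (t.factors.length + t.exp) * t.weight := by
  have hremovals : (((removals t.factors).map fun q =>
      (⟨t.coeff * ⟪q.1, v⟫, q.2, t.exp⟩ : RadialMonomial F)).map weight).sum ≤
      t.factors.length * t.weight := by
    refine (List.sum_le_card_nsmul _ t.weight fun w hw => ?_).trans_eq (by
      simp [length_removals])
    obtain ⟨s, hs, rfl⟩ := List.mem_map.mp hw
    obtain ⟨q, hq, rfl⟩ := List.mem_map.mp hs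
    exact weight_le_of_mem_removals hv t hq
  have hnew : weight (⟨-t.exp * t.coeff, v :: t.factors, t.exp + 2⟩ : RadialMonomial F) ≤
      t.exp * t.weight := by
    have hw : weight (⟨-t.exp * t.coeff, v :: t.factors, t.exp + 2⟩ : RadialMonomial F) =
        t.exp * (‖v‖ * t.weight) := by
      simp only [weight, List.map_cons, List.prod_cons, abs_mul, abs_neg, Nat.abs_cast]
      ring
    rw [hw]
    gcongr
    exact mul_le_of_le_one_left t.weight_nonneg hv
  simp only [weightSum, deriv, List.map_append, List.sum_append, List.map_cons, List.map_nil,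
    List.sum_cons, List.sum_nil, add_zero]
  linarith

theorem weightSum_flatMap_deriv_le {k : ℕ} {R : List (RadialMonomial F)}
    (hR : ∀ t ∈ R, t.IsOfOrder k) {v : F} (hv : ‖v‖ ≤ 1) :
    weightSum (R.flatMap (deriv v)) ≤ 3 * (k + 1) * weightSum R := by
  rw [weightSum, weightSum, List.flatMap, List.map_flatten, List.sum_flatten, List.map_map,
    List.map_map, ← List.sum_map_mul_left]
  refine List.sum_le_sum fun t ht => (weightSum_deriv_le hv t).trans ?_
  obtain ⟨hexp, hlen⟩ := hR t ht
  gcongr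
  · exact t.weight_nonneg
  · exact_mod_cast (by omega : t.factors.length + t.exp ≤ 3 * (k + 1))

theorem IsOfOrder.of_mem_deriv {k : ℕ} {t : RadialMonomial F} (ht : t.IsOfOrder k) {v : F}
    {s : RadialMonomial F} (hs : s ∈ t.deriv v) : s.IsOfOrder (k + 1) := by
  obtain ⟨hexp, hlen⟩ := ht
  simp only [deriv, List.mem_append, List.mem_map, List.mem_singleton] at hs
  rcases hs with ⟨q, hq, rfl⟩ | rfl
  · have := (perm_of_mem_removals hq).length_eq
    simp only [List.length_cons] at this
    exact ⟨by simp only; omega, by simp only; omega⟩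
  · exact ⟨by simp only [List.length_cons]; omega, by simp only [List.length_cons]; omega⟩

theorem abs_eval_le {k : ℕ} {t : RadialMonomial F} (ht : t.exp = t.factors.length + k) {ξ : F}
    (hξ : ξ ≠ 0) : |t.eval ξ| ≤ t.weight * (‖ξ‖ ^ k)⁻¹ := by
  have hξ' : 0 < ‖ξ‖ := norm_pos_iff.mpr hξ
  calc |t.eval ξ| = |t.coeff| * |prodInner t.factors ξ| * (‖ξ‖ ^ t.exp)⁻¹ := by
        rw [eval, abs_mul, abs_mul, abs_inv, abs_pow, abs_norm]
    _ ≤ |t.coeff| * ((t.factors.map fun a => ‖a‖).prod * ‖ξ‖ ^ t.factors.length) *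
          (‖ξ‖ ^ t.exp)⁻¹ := by gcongr; exact abs_prodInner_le _ _
    _ = t.weight * (‖ξ‖ ^ k)⁻¹ := by
        rw [weight, ht, pow_add]
        field_simp

theorem abs_evalSum_le {k : ℕ} {R : List (RadialMonomial F)}
    (hR : ∀ t ∈ R, t.exp = t.factors.length + k) {ξ : F} (hξ : ξ ≠ 0) :
    |evalSum R ξ| ≤ weightSum R * (‖ξ‖ ^ k)⁻¹ := by
  induction R with
  | nil => simp [evalSum, weightSum]
  | cons t R ih =>
    simp only [evalSum, weightSum, List.map_cons, List.sum_cons, add_mul] at ih ⊢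
    exact (abs_add_le _ _).trans (add_le_add (abs_eval_le (hR t List.mem_cons_self) hξ)
      (ih fun s hs => hR s (List.mem_cons_of_mem t hs)))

end RadialMonomial

open RadialMonomial

def IsMonomialSum (k : ℕ) (W : ℝ) (g : F → ℝ) : Prop :=
  ∃ R : List (RadialMonomial F), (∀ t ∈ R, t.IsOfOrder k) ∧ weightSum R ≤ W ∧
    ∀ ξ ≠ 0, g ξ = evalSum R ξ

theorem isMonomialSum_inner_div_norm (c : F) : IsMonomialSum 0 ‖c‖ fun ξ => ⟪c, ξ⟫ / ‖ξ‖ :=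
  ⟨[⟨1, [c], 1⟩], by simp [IsOfOrder], by simp [weightSum, weight], fun ξ _ => by
    simp [evalSum, eval, prodInner, div_eq_mul_inv]⟩

namespace IsMonomialSum

variable {k : ℕ} {W : ℝ} {g : F → ℝ}

theorem abs_le (h : IsMonomialSum k W g) {ξ : F} (hξ : ξ ≠ 0) : |g ξ| ≤ W * (‖ξ‖ ^ k)⁻¹ := by
  obtain ⟨R, hR, hW, hg⟩ := h
  rw [hg ξ hξ]
  exact (abs_evalSum_le (fun t ht => (hR t ht).1) hξ).trans (by gcongr)

theorem dirDeriv_succ {v : F} (hv : ‖v‖ ≤ 1) (h : IsMonomialSum k W g) :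
    IsMonomialSum (k + 1) (3 * (k + 1) * W) (dirDeriv v g) := by
  obtain ⟨R, hR, hW, hg⟩ := h
  refine ⟨R.flatMap (deriv v), fun s hs => ?_, ?_, fun ξ hξ => ?_⟩
  · obtain ⟨t, ht, hs⟩ := List.mem_flatMap.mp hs
    exact (hR t ht).of_mem_deriv hs
  · exact (weightSum_flatMap_deriv_le hR hv).trans (by gcongr)
  · obtain ⟨D, hD, hDv⟩ := hasFDerivAt_evalSum R hξ
    have hgR : g =ᶠ[nhds ξ] evalSum R := Filter.eventually_of_mem (isOpen_ne.mem_nhds hξ) hg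
    rw [_root_.dirDeriv, hgR.fderiv_eq, hD.fderiv, hDv]

theorem iterate_dirDeriv {v : F} (hv : ‖v‖ ≤ 1) (h : IsMonomialSum k (3 ^ k * k ! * W) g)
    (m : ℕ) : IsMonomialSum (k + m) (3 ^ (k + m) * (k + m)! * W) ((dirDeriv v)^[m] g) := by
  induction m with
  | zero => exact h
  | succ m ih =>
    rw [Function.iterate_succ_apply', ← add_assoc]
    convert ih.dirDeriv_succ hv using 1
    push_cast [Nat.factorial_succ]
    ring

theorem foldr_iterate_dirDeriv {ι : Type*} {d : ι → F} (hd : ∀ i, ‖d i‖ ≤ 1) (α : ι → ℕ)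
    (h : IsMonomialSum 0 W g) (l : List ι) :
    IsMonomialSum (l.map α).sum (3 ^ (l.map α).sum * (l.map α).sum ! * W)
      (l.foldr (fun i h => (dirDeriv (d i))^[α i] h) g) := by
  induction l with
  | nil => simpa using h
  | cons i l ih =>
    rw [List.foldr_cons, List.map_cons, List.sum_cons, add_comm]
    exact ih.iterate_dirDeriv (hd i) (α i)

end IsMonomialSum

variable {n : ℕ}

theorem slice_iterate_pdxi (i : Fin n) (m : ℕ) (g : E n × E n → ℝ) (x : E n) :
    (fun ξ => (pdxi i)^[m] g (x, ξ)) =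
      (dirDeriv (EuclideanSpace.single i 1))^[m] fun ξ => g (x, ξ) := by
  induction m with
  | zero => rfl
  | succ m ih =>
    rw [Function.iterate_succ_apply', Function.iterate_succ_apply', ← ih]
    rfl

theorem slice_mderivXi (α : Fin n → ℕ) (g : E n × E n → ℝ) (x : E n) :
    (fun ξ => mderivXi α g (x, ξ)) = (List.finRange n).foldr
      (fun i h => (dirDeriv (EuclideanSpace.single i 1))^[α i] h) fun ξ => g (x, ξ) := by
  rw [mderivXi]
  induction List.finRange n with
  | nil => rfl
  | cons i l ih => rw [List.foldr_cons, List.foldr_cons, slice_iterate_pdxi, ih]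

theorem abs_mderivXi_le (α : Fin n → ℕ) {g : E n × E n → ℝ} {x c : E n}
    (hg : (fun ξ => g (x, ξ)) = fun ξ => ⟪c, ξ⟫ / ‖ξ‖) {ξ : E n} (hξ : ξ ≠ 0) :
    |mderivXi α g (x, ξ)| ≤ 3 ^ (∑ i, α i) * (∑ i, α i)! * ‖c‖ * (‖ξ‖ ^ (∑ i, α i))⁻¹ := by
  have h := (isMonomialSum_inner_div_norm c).foldr_iterate_dirDeriv
    (fun i => (PiLp.norm_single 2 _ i (1 : ℝ)).trans_le norm_one.le) α (List.finRange n)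
  rw [← hg, ← slice_mderivXi, ← Fin.sum_univ_def] at h
  exact h.abs_le hξ

theorem pdx_inner_div_norm (i : Fin n) :
    pdx i (fun p : E n × E n => ⟪p.1, p.2⟫ / ‖p.2‖) =
      fun p => ⟪EuclideanSpace.single i 1, p.2⟫ / ‖p.2‖ := by
  funext p
  have hlin : (fun y : E n => ⟪y, p.2⟫ / ‖p.2‖) = ⇑(‖p.2‖⁻¹ • innerSL ℝ p.2) := by
    ext y
    simp [real_inner_comm p.2, div_eq_inv_mul]
  simp only [pdx, hlin, ContinuousLinearMap.fderiv]
  simp [real_inner_comm p.2, div_eq_inv_mul]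

theorem pdx_comp_snd (i : Fin n) (u : E n → ℝ) : pdx i (fun p : E n × E n => u p.2) = 0 := by
  funext p
  simp [pdx]

theorem iterate_pdx_comp_snd (i : Fin n) (u : E n → ℝ) {m : ℕ} (hm : m ≠ 0) :
    (pdx i)^[m] (fun p : E n × E n => u p.2) = 0 := by
  obtain ⟨m, rfl⟩ := Nat.exists_eq_succ_of_ne_zero hm
  rw [Function.iterate_succ_apply, pdx_comp_snd]
  exact Function.iterate_fixed (pdx_comp_snd i 0) m

def XDerivShape (n s : ℕ) (g : E n × E n → ℝ) : Prop :=
  (s = 0 → g = fun p => ⟪p.1, p.2⟫ / ‖p.2‖) ∧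
    (s = 1 → ∃ j, g = fun p => ⟪EuclideanSpace.single j 1, p.2⟫ / ‖p.2‖) ∧
    (2 ≤ s → g = 0)

theorem XDerivShape.iterate_pdx {s : ℕ} {g : E n × E n → ℝ} (h : XDerivShape n s g)
    (i : Fin n) (m : ℕ) : XDerivShape n (m + s) ((pdx i)^[m] g) := by
  obtain ⟨h0, h1, h2⟩ := h
  rcases m with _ | m
  · simpa only [zero_add, Function.iterate_zero, id] using ⟨h0, h1, h2⟩
  have hzero : 2 ≤ m + 1 + s → (pdx i)^[m + 1] g = 0 := by
    intro hs
    rcases Nat.eq_zero_or_pos s with rfl | hs0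
    · rw [h0 rfl, Function.iterate_succ_apply, pdx_inner_div_norm]
      exact iterate_pdx_comp_snd i (fun ξ => ⟪EuclideanSpace.single i 1, ξ⟫ / ‖ξ‖) (by omega)
    · obtain ⟨u, rfl⟩ : ∃ u : E n → ℝ, g = fun p => u p.2 := by
        rcases (by omega : s = 1 ∨ 2 ≤ s) with hs1 | hs2
        · obtain ⟨j, rfl⟩ := h1 hs1
          exact ⟨fun ξ => ⟪EuclideanSpace.single j 1, ξ⟫ / ‖ξ‖, rfl⟩
        · exact ⟨0, h2 hs2⟩
      exact iterate_pdx_comp_snd i u (by omega)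
  refine ⟨fun hs => by omega, fun hs => ?_, hzero⟩
  obtain ⟨rfl, rfl⟩ : m = 0 ∧ s = 0 := by omega
  exact ⟨i, by rw [h0 rfl, Function.iterate_one, pdx_inner_div_norm]⟩

theorem xDerivShape_mderivX (β : Fin n → ℕ) :
    XDerivShape n (∑ i, β i) (mderivX β fun p => ⟪p.1, p.2⟫ / ‖p.2‖) := by
  rw [Fin.sum_univ_def, mderivX]
  induction List.finRange n with
  | nil => exact ⟨fun _ => rfl, by simp, by simp⟩
  | cons i l ih =>
    rw [List.foldr_cons, List.map_cons, List.sum_cons]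
    exact ih.iterate_pdx i (β i)

theorem exists_slice_mderivX_eq {β : Fin n → ℕ} (hβ : ∑ i, β i ≤ 1) (x : E n) :
    ∃ c : E n, (fun ξ => mderivX β (fun p => ⟪p.1, p.2⟫ / ‖p.2‖) (x, ξ)) =
      (fun ξ => ⟪c, ξ⟫ / ‖ξ‖) ∧ ‖c‖ = ‖x‖ ^ ((1 : ℝ) - (∑ i, β i : ℕ)) := by
  obtain ⟨h0, h1, -⟩ := xDerivShape_mderivX β
  rcases Nat.le_one_iff_eq_zero_or_eq_one.mp hβ with hβ | hβ
  · exact ⟨x, by rw [h0 hβ], by simp [hβ]⟩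
  · obtain ⟨j, hj⟩ := h1 hβ
    exact ⟨EuclideanSpace.single j 1, by rw [hj], by simp [hβ]⟩

end

theorem stmt5_general (n : ℕ) :
    ∃ A₀ : ℝ, 0 < A₀ ∧ ∀ (α β : Fin n → ℕ) (x ξ : E n), ξ ≠ 0 →
      ((∑ i, β i) ≤ 1 →
        |mderivXi α (mderivX β (fun p => ⟪p.1, p.2⟫ / ‖p.2‖)) (x, ξ)| ≤
          A₀ ^ (∑ i, α i + ∑ i, β i + 1) * (Nat.factorial (∑ i, α i) : ℝ) *
            (Nat.factorial (∑ i, β i) : ℝ) * ‖x‖ ^ ((1:ℝ) - (∑ i, β i : ℝ)) *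
            ‖ξ‖ ^ (-(∑ i, α i : ℝ)))
      ∧ (2 ≤ ∑ i, β i →
        mderivX β (fun p => ⟪p.1, p.2⟫ / ‖p.2‖) (x, ξ) = 0) := by
  refine ⟨3, by norm_num, fun α β x ξ hξ => ⟨fun hβ => ?_, fun hβ => ?_⟩⟩
  · obtain ⟨c, hc, hnorm⟩ := exists_slice_mderivX_eq hβ x
    refine (abs_mderivXi_le α hc hξ).trans ?_
    rw [← Nat.cast_sum, ← Nat.cast_sum, ← hnorm, Real.rpow_neg (norm_nonneg ξ), Real.rpow_natCast,
      Nat.factorial_eq_one.mpr hβ, Nat.cast_one, mul_one]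
    gcongr
    · norm_num
    · omega
  · rw [(xDerivShape_mderivX β).2.2 hβ, Pi.zero_apply]

theorem stmt5 (n : ℕ) (hn : 1 ≤ n) :
    ∃ A₀ : ℝ, 0 < A₀ ∧ ∀ (α β : Fin n → ℕ) (x ξ : E n), ξ ≠ 0 →
      ((∑ i, β i) ≤ 1 →
        |mderivXi α (mderivX β (fun p => ⟪p.1, p.2⟫ / ‖p.2‖)) (x, ξ)| ≤
          A₀ ^ (∑ i, α i + ∑ i, β i + 1) * (Nat.factorial (∑ i, α i) : ℝ) *
            (Nat.factorial (∑ i, β i) : ℝ) * ‖x‖ ^ ((1:ℝ) - (∑ i, β i : ℝ)) *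
            ‖ξ‖ ^ (-(∑ i, α i : ℝ)))
      ∧ (2 ≤ ∑ i, β i →
        mderivX β (fun p => ⟪p.1, p.2⟫ / ‖p.2‖) (x, ξ) = 0) :=
  stmt5_general n
end
end

section
/- Let s > 1 and M > 0. Define λ̃(x,ξ) = -λ₁(x,ξ)χ̃(x,ξ) - λ₂(x,ξ)(1-χ̃(x,ξ)) with χ̃(x,ξ) = χ(2(x·ω)/⟨x⟩), where χ ∈ C_c^∞(ℝ), 0 ≤ χ ≤ 1, tχ'(t) ≤ 0, and λ₁, λ₂ are as in the construction (λᵢ(x,ξ) = ∫₀^{x·ω} gᵢ(x-τω,ξ)dτ with g₁(x)=M⟨x⟩^{-1+1/s}, g₂(x,ξ)=M⟨x·ω⟩^{-1+1/s}). Then for all x ∈ ℝⁿ, ξ ≠ 0: ∑_{j=1}^n (∂_{x_j}λ̃)(x,ξ) ξ_j ≤ -M⟨x⟩^{1/s-1}|ξ|. -/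
open Real MeasureTheory intervalIntegral
open scoped RealInnerProductSpace BigOperators

noncomputable section

/-
Write ω = ξ/|ξ|, p = 1/s − 1 and G_c(u) = ∫₀ᵘ M (c + σ²)^{p/2} dσ. Substituting σ = x·ω − τ gives
λ₁ = G_c(x·ω) with c = h² + |x|² − (x·ω)² and λ₂ = G_{h²}(x·ω); since c is constant on lines in
direction ω, the derivative along ξ = |ξ|ω is |ξ| times the u-derivative at u = x·ω of
−G_c χ(φ) − G_{h²} (1 − χ(φ)), φ(u) = 2u/√(c + u²). The product rule gives
−g_c χ − g_{h²} (1 − χ) − (G_c − G_{h²}) χ'(φ) φ'. As c ≥ h², g_c ≤ g_{h²}, so the first two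
terms are at most −g_c(x·ω) = −M⟨x⟩^p; G_c − G_{h²} and χ'(φ(u)) both have the sign of −u, and
φ' ≥ 0, so the last term is ≤ 0. Differentiability in x follows from the scaling
G_c(b) = √c^{p+1} G_1(b/√c).
-/

/- After the substitution σ = x·ω − τ both g₁ and g₂ become `weight M p c σ`, with
`c = transverseSq (h ^ 2) ω x` for g₁ and `c = h ^ 2` for g₂; in `blend`, `u` is x·ω and
`√(c + u ^ 2)` is ⟨x⟩. -/
def weight (M p c σ : ℝ) : ℝ := M * √(c + σ ^ 2) ^ p

def weightIntegral (M p c b : ℝ) : ℝ := ∫ σ in (0:ℝ)..b, weight M p c σ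

def blend (M p a : ℝ) (χ : ℝ → ℝ) (c u : ℝ) : ℝ :=
  -weightIntegral M p c u * χ (2 * u / √(c + u ^ 2))
    - weightIntegral M p a u * (1 - χ (2 * u / √(c + u ^ 2)))

section weight

variable {M p c : ℝ}

theorem continuous_weight (hc : 0 < c) : Continuous (weight M p c) :=
  continuous_const.mul <| (continuous_const.add (continuous_pow 2)).sqrt.rpow_const
    fun σ => Or.inl (Real.sqrt_pos.2 (add_pos_of_pos_of_nonneg hc (sq_nonneg σ))).ne'

theorem hasDerivAt_weightIntegral (hc : 0 < c) (b : ℝ) :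
    HasDerivAt (weightIntegral M p c) (weight M p c b) b :=
  ((continuous_weight hc).integral_hasStrictDerivAt 0 b).hasDerivAt

theorem weight_le_weight_of_le {c₁ c₂ : ℝ} (hM : 0 ≤ M) (hp : p ≤ 0) (hc₁ : 0 < c₁)
    (hc : c₁ ≤ c₂) (σ : ℝ) : weight M p c₂ σ ≤ weight M p c₁ σ :=
  mul_le_mul_of_nonneg_left (Real.rpow_le_rpow_of_nonpos (Real.sqrt_pos.2 (by positivity))
    (Real.sqrt_le_sqrt (by linarith)) hp) hM

theorem mul_weightIntegral_sub_nonpos {c₁ c₂ : ℝ} (hM : 0 ≤ M) (hp : p ≤ 0) (hc₁ : 0 < c₁)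
    (hc : c₁ ≤ c₂) (b : ℝ) : b * (weightIntegral M p c₂ b - weightIntegral M p c₁ b) ≤ 0 := by
  have hint : ∀ c, 0 < c → ∀ a b : ℝ, IntervalIntegrable (weight M p c) volume a b :=
    fun c hc a b => (continuous_weight hc).intervalIntegrable a b
  have hle := weight_le_weight_of_le hM hp hc₁ hc
  have hc₂ : 0 < c₂ := hc₁.trans_le hc
  rcases le_total 0 b with hb | hb
  · have := integral_mono_on hb (hint c₂ hc₂ 0 b) (hint c₁ hc₁ 0 b) fun σ _ => hle σ
    exact mul_nonpos_of_nonneg_of_nonpos hb (by unfold weightIntegral; linarith)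
  · have := integral_mono_on hb (hint c₂ hc₂ b 0) (hint c₁ hc₁ b 0) fun σ _ => hle σ
    unfold weightIntegral
    rw [integral_symm b, integral_symm b]
    exact mul_nonpos_of_nonpos_of_nonneg hb (by linarith)

theorem weightIntegral_eq_sqrt_rpow_mul (hc : 0 < c) (b : ℝ) :
    weightIntegral M p c b = √c ^ (p + 1) * weightIntegral M p 1 (b / √c) := by
  have hk : 0 < √c := Real.sqrt_pos.2 hc
  have hscale : ∀ u, weight M p c (√c * u) = √c ^ p * weight M p 1 u := by
    intro u
    have : c + (√c * u) ^ 2 = √c ^ 2 * (1 + u ^ 2) := by rw [mul_pow, Real.sq_sqrt hc.le]; ring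
    rw [weight, weight, this, Real.sqrt_mul (by positivity), Real.sqrt_sq hk.le,
      Real.mul_rpow hk.le (Real.sqrt_nonneg _)]
    ring
  have := smul_integral_comp_mul_left (weight M p c) (√c) (a := 0) (b := b / √c)
  rw [mul_zero, mul_div_cancel₀ _ hk.ne'] at this
  rw [weightIntegral, ← this, smul_eq_mul, funext hscale, intervalIntegral.integral_const_mul,
    Real.rpow_add_one hk.ne', weightIntegral]
  ring

theorem DifferentiableAt.weightIntegral {F : Type*} [NormedAddCommGroup F] [NormedSpace ℝ F]
    {c b : F → ℝ} {x : F} (hc : DifferentiableAt ℝ c x) (hb : DifferentiableAt ℝ b x)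
    (hcx : 0 < c x) : DifferentiableAt ℝ (fun y => weightIntegral M p (c y) (b y)) x := by
  have hsqrt : DifferentiableAt ℝ (fun y => √(c y)) x := hc.sqrt hcx.ne'
  have hk : √(c x) ≠ 0 := (Real.sqrt_pos.2 hcx).ne'
  have hscaled : (fun y => _root_.weightIntegral M p (c y) (b y)) =ᶠ[nhds x]
      fun y => √(c y) ^ (p + 1) * _root_.weightIntegral M p 1 (b y / √(c y)) := by
    filter_upwards [Filter.Tendsto.eventually hc.continuousAt (lt_mem_nhds hcx)] with y hy
    exact weightIntegral_eq_sqrt_rpow_mul hy _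
  have hquot : DifferentiableAt ℝ (fun y => b y / √(c y)) x := by
    simpa only [div_eq_mul_inv] using hb.fun_mul (hsqrt.fun_inv hk)
  refine DifferentiableAt.congr_of_eventuallyEq ?_ hscaled
  exact (hsqrt.rpow_const (Or.inl hk)).mul
    ((hasDerivAt_weightIntegral one_pos _).differentiableAt.comp x hquot)

end weight

theorem hasDerivAt_two_mul_div_sqrt {c : ℝ} (hc : 0 < c) (u : ℝ) :
    HasDerivAt (fun v => 2 * v / √(c + v ^ 2)) (2 * c / (√(c + u ^ 2) * (c + u ^ 2))) u := by
  have hq : 0 < c + u ^ 2 := by positivity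
  have hs : 0 < √(c + u ^ 2) := Real.sqrt_pos.2 hq
  have hsq : HasDerivAt (fun v => c + v ^ 2) (2 * u) u := by
    simpa using (hasDerivAt_pow 2 u).const_add c
  have hsqrt : HasDerivAt (fun v => √(c + v ^ 2)) (u / √(c + u ^ 2)) u := by
    convert hsq.sqrt hq.ne' using 1
    field_simp
  have hlin : HasDerivAt (fun v => 2 * v) 2 u := by simpa using (hasDerivAt_id u).const_mul 2
  refine (hlin.fun_div hsqrt hs.ne').congr_deriv ?_
  rw [Real.sq_sqrt hq.le]
  field_simp
  rw [Real.sq_sqrt hq.le]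
  ring

theorem exists_hasDerivAt_interpolate_le {G₁ G₂ φ χ : ℝ → ℝ} {g₁ g₂ dφ dχ u : ℝ}
    (hG₁ : HasDerivAt G₁ g₁ u) (hG₂ : HasDerivAt G₂ g₂ u) (hφ : HasDerivAt φ dφ u)
    (hχ : HasDerivAt χ dχ (φ u)) (hχ1 : χ (φ u) ≤ 1) (hg : g₁ ≤ g₂) (hdφ : 0 ≤ dφ)
    (hsign : 0 ≤ (G₁ u - G₂ u) * dχ) :
    ∃ D, HasDerivAt (fun v => -G₁ v * χ (φ v) - G₂ v * (1 - χ (φ v))) D u ∧ D ≤ -g₁ := by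
  have hχφ := hχ.comp u hφ
  refine ⟨_, (hG₁.fun_neg.fun_mul hχφ).fun_sub (hG₂.fun_mul (hχφ.const_sub 1)), ?_⟩
  rw [Function.comp_apply]
  nlinarith [mul_nonneg hsign hdφ, mul_nonneg (sub_nonneg.2 hg) (sub_nonneg.2 hχ1)]

theorem exists_hasDerivAt_blend_le {M p a c : ℝ} {χ : ℝ → ℝ} (hM : 0 ≤ M) (hp : p ≤ 0)
    (ha : 0 < a) (hac : a ≤ c) (hχd : Differentiable ℝ χ) (hχ1 : ∀ t, χ t ≤ 1)
    (hχ' : ∀ t, t * deriv χ t ≤ 0) (u : ℝ) :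
    ∃ D, HasDerivAt (blend M p a χ c) D u ∧ D ≤ -weight M p c u := by
  have hc : 0 < c := ha.trans_le hac
  set t := 2 * u / √(c + u ^ 2)
  have hk : 0 < 2 / √(c + u ^ 2) := div_pos two_pos (Real.sqrt_pos.2 (by positivity))
  have hgap := mul_weightIntegral_sub_nonpos hM hp ha hac u
  have hslope : u * deriv χ t ≤ 0 := by
    have h : t * deriv χ t = 2 / √(c + u ^ 2) * (u * deriv χ t) := by simp only [t]; ring
    exact nonpos_of_mul_nonpos_right (h ▸ hχ' t) hk
  have hsign : 0 ≤ (weightIntegral M p c u - weightIntegral M p a u) * deriv χ t := by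
    rcases lt_trichotomy u 0 with hu | rfl | hu
    · exact mul_nonneg (by nlinarith) (by nlinarith)
    · simp [weightIntegral]
    · exact mul_nonneg_of_nonpos_of_nonpos (by nlinarith) (by nlinarith)
  exact exists_hasDerivAt_interpolate_le (hasDerivAt_weightIntegral hc u)
    (hasDerivAt_weightIntegral ha u) (hasDerivAt_two_mul_div_sqrt hc u) (hχd t).hasDerivAt
    (hχ1 t) (weight_le_weight_of_le hM hp ha hac u) (by positivity) hsign

theorem DifferentiableAt.blend {F : Type*} [NormedAddCommGroup F] [NormedSpace ℝ F]
    {M p a : ℝ} {χ : ℝ → ℝ} {c b : F → ℝ} {x : F} (ha : 0 < a) (hχd : Differentiable ℝ χ)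
    (hc : DifferentiableAt ℝ c x) (hb : DifferentiableAt ℝ b x) (hcx : 0 < c x) :
    DifferentiableAt ℝ (fun y => _root_.blend M p a χ (c y) (b y)) x := by
  have hpos : 0 < c x + b x ^ 2 := add_pos_of_pos_of_nonneg hcx (sq_nonneg _)
  have hq : DifferentiableAt ℝ (fun y => √(c y + b y ^ 2)) x :=
    (hc.add (hb.pow 2)).sqrt hpos.ne'
  have hθ : DifferentiableAt ℝ (fun y => 2 * b y / √(c y + b y ^ 2)) x := by
    simpa only [div_eq_mul_inv] using
      (hb.const_mul 2).fun_mul (hq.fun_inv (Real.sqrt_pos.2 hpos).ne')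
  have hχθ := (hχd _).comp x hθ
  exact ((hc.weightIntegral hb hcx).neg.mul hχθ).sub
    ((differentiableAt_const a).weightIntegral hb ha |>.mul ((differentiableAt_const 1).sub hχθ))

theorem sum_apply_single_mul {ι : Type*} [Fintype ι] [DecidableEq ι]
    (L : EuclideanSpace ℝ ι →L[ℝ] ℝ) (v : EuclideanSpace ℝ ι) :
    ∑ j, L (EuclideanSpace.single j 1) * v j = L v := by
  conv_rhs => rw [← (EuclideanSpace.basisFun ι ℝ).sum_repr v]
  simp [map_sum, mul_comm]

theorem fderiv_apply_eq_of_line {F : Type*} [NormedAddCommGroup F] [NormedSpace ℝ F]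
    {f : F → ℝ} {Λ : ℝ → ℝ} {x v : F} {r D : ℝ} (hf : DifferentiableAt ℝ f x)
    (hline : ∀ t : ℝ, f (x + t • v) = Λ (r + t)) (hΛ : HasDerivAt Λ D r) :
    fderiv ℝ f x v = D := by
  have hf' : HasFDerivAt f (fderiv ℝ f x) (x + (0 : ℝ) • v) := by
    simpa using hf.hasFDerivAt
  have h1 := hf'.comp_hasDerivAt (0 : ℝ) (((hasDerivAt_id 0).smul_const v).const_add x)
  have h2 : HasDerivAt (fun t => Λ (r + t)) D 0 := HasDerivAt.comp_const_add r 0 (by simpa using hΛ)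
  rw [← funext hline] at h2
  simpa using h1.unique h2

section unitVector

variable {F : Type*} [NormedAddCommGroup F] [InnerProductSpace ℝ F] {ω : F}

def transverseSq (a : ℝ) (ω y : F) : ℝ := a + (‖y‖ ^ 2 - ⟪y, ω⟫ ^ 2)

theorem le_transverseSq (hω : ‖ω‖ = 1) (a : ℝ) (y : F) : a ≤ transverseSq a ω y := by
  have := abs_real_inner_le_norm y ω
  rw [hω, mul_one] at this
  have := sq_le_sq' (neg_le_of_abs_le this) (le_of_abs_le this)
  unfold transverseSq
  linarith

theorem differentiable_transverseSq (a : ℝ) (ω : F) : Differentiable ℝ (transverseSq a ω) :=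
  (differentiable_const a).add (differentiable_id.norm_sq ℝ |>.sub
    ((differentiable_id.inner ℝ (differentiable_const ω)).pow 2))

theorem inner_add_smul_of_norm_eq_one (hω : ‖ω‖ = 1) (x : F) (t : ℝ) :
    ⟪x + t • ω, ω⟫ = ⟪x, ω⟫ + t := by
  rw [inner_add_left, real_inner_smul_left, real_inner_self_eq_norm_sq, hω]
  ring

theorem transverseSq_add_smul (hω : ‖ω‖ = 1) (a : ℝ) (x : F) (t : ℝ) :
    transverseSq a ω (x + t • ω) = transverseSq a ω x := by
  rw [transverseSq, transverseSq, inner_add_smul_of_norm_eq_one hω, norm_add_sq_real,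
    real_inner_smul_right, norm_smul, hω, Real.norm_eq_abs, mul_one, sq_abs]
  ring

theorem transverseSq_add_inner_sq (a : ℝ) (ω y : F) :
    transverseSq a ω y + ⟪y, ω⟫ ^ 2 = a + ‖y‖ ^ 2 := by
  rw [transverseSq]
  ring

theorem weight_transverseSq (M p a : ℝ) (ω x : F) :
    weight M p (transverseSq a ω x) ⟪x, ω⟫ = M * √(a + ‖x‖ ^ 2) ^ p := by
  rw [weight, transverseSq_add_inner_sq]

theorem integral_weight_norm_sub_smul (hω : ‖ω‖ = 1) (M p a : ℝ) (y : F) :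
    ∫ τ in (0:ℝ)..⟪y, ω⟫, M * √(a + ‖y - τ • ω‖ ^ 2) ^ p
      = weightIntegral M p (transverseSq a ω y) ⟪y, ω⟫ := by
  have h : ∀ τ : ℝ, M * √(a + ‖y - τ • ω‖ ^ 2) ^ p
      = weight M p (transverseSq a ω y) (⟪y, ω⟫ - τ) := by
    intro τ
    rw [weight, transverseSq, norm_sub_sq_real, real_inner_smul_right, norm_smul, hω,
      Real.norm_eq_abs, mul_one, sq_abs]
    ring_nf
  simp only [h, integral_comp_sub_left, sub_self, sub_zero, weightIntegral]

theorem integral_weight_inner_sub_smul (hω : ‖ω‖ = 1) (M p a : ℝ) (y : F) :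
    ∫ τ in (0:ℝ)..⟪y, ω⟫, M * √(a + ⟪y - τ • ω, ω⟫ ^ 2) ^ p = weightIntegral M p a ⟪y, ω⟫ := by
  have h : ∀ τ : ℝ, M * √(a + ⟪y - τ • ω, ω⟫ ^ 2) ^ p = weight M p a (⟪y, ω⟫ - τ) := by
    intro τ
    rw [weight, inner_sub_left, real_inner_smul_left, real_inner_self_eq_norm_sq, hω]
    ring_nf
  simp only [h, integral_comp_sub_left, sub_self, sub_zero, weightIntegral]

end unitVector

theorem stmt11_general {n : ℕ} (M s h : ℝ) (hM : 0 < M) (hs : 1 < s) (hh : 1 ≤ h)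
    (χ : ℝ → ℝ) (hχsm : ContDiff ℝ (⊤ : ℕ∞) χ)
    (hχ1 : ∀ t, χ t ≤ 1) (hχ' : ∀ t, t * deriv χ t ≤ 0)
    (lam1 lam2 lamt : E n → E n → ℝ)
    (hlam1 : ∀ x ξ : E n, lam1 x ξ =
      ∫ τ in (0:ℝ)..(⟪x, ‖ξ‖⁻¹ • ξ⟫),
        M * Real.sqrt (h ^ 2 + ‖x - τ • (‖ξ‖⁻¹ • ξ)‖ ^ 2) ^ (-1 + 1 / s))
    (hlam2 : ∀ x ξ : E n, lam2 x ξ =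
      ∫ τ in (0:ℝ)..(⟪x, ‖ξ‖⁻¹ • ξ⟫),
        M * Real.sqrt (h ^ 2 + (⟪x - τ • (‖ξ‖⁻¹ • ξ), ‖ξ‖⁻¹ • ξ⟫ : ℝ) ^ 2) ^ (-1 + 1 / s))
    (hlamt : ∀ x ξ : E n, lamt x ξ =
      -(lam1 x ξ) * χ (2 * ⟪x, ‖ξ‖⁻¹ • ξ⟫ / Real.sqrt (h ^ 2 + ‖x‖ ^ 2))
        - lam2 x ξ * (1 - χ (2 * ⟪x, ‖ξ‖⁻¹ • ξ⟫ / Real.sqrt (h ^ 2 + ‖x‖ ^ 2)))) :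
    ∀ (x ξ : E n), ξ ≠ 0 →
      ∑ j : Fin n, fderiv ℝ (fun y => lamt y ξ) x (EuclideanSpace.single j 1) * ξ j
        ≤ -M * Real.sqrt (h ^ 2 + ‖x‖ ^ 2) ^ (1 / s - 1) * ‖ξ‖ := by
  intro x ξ hξ
  set ω := ‖ξ‖⁻¹ • ξ
  have hω : ‖ω‖ = 1 := norm_smul_inv_norm (𝕜 := ℝ) hξ
  have hp : -1 + 1 / s ≤ 0 := by
    have : 1 / s < 1 := (div_lt_one (by linarith)).2 hs
    linarith
  have ha : 0 < h ^ 2 := by positivity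
  have hχd : Differentiable ℝ χ := hχsm.differentiable (by simp)
  have hlamt' : (fun y => lamt y ξ)
      = fun y => blend M (-1 + 1 / s) (h ^ 2) χ (transverseSq (h ^ 2) ω y) ⟪y, ω⟫ :=
    funext fun y => by
      rw [hlamt, hlam1, hlam2, integral_weight_norm_sub_smul hω, integral_weight_inner_sub_smul hω,
        blend, transverseSq_add_inner_sq]
  obtain ⟨D, hD, hDle⟩ := exists_hasDerivAt_blend_le hM.le hp ha (le_transverseSq hω _ x) hχd hχ1
    hχ' ⟪x, ω⟫
  have hline : fderiv ℝ (fun y => lamt y ξ) x ω = D := by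
    rw [hlamt']
    refine fderiv_apply_eq_of_line (DifferentiableAt.blend ha hχd
      (differentiable_transverseSq _ ω x) (differentiableAt_id.inner ℝ (differentiableAt_const ω))
      (ha.trans_le (le_transverseSq hω _ x))) (fun t => ?_) hD
    rw [inner_add_smul_of_norm_eq_one hω, transverseSq_add_smul hω]
  have hdir : fderiv ℝ (fun y => lamt y ξ) x ξ = ‖ξ‖ * D := by
    rw [← hline, ← smul_eq_mul, ← map_smul, smul_inv_smul₀ (norm_ne_zero_iff.2 hξ)]
  rw [sum_apply_single_mul, hdir]
  calc ‖ξ‖ * D ≤ ‖ξ‖ * -weight M (-1 + 1 / s) (transverseSq (h ^ 2) ω x) ⟪x, ω⟫ :=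
        mul_le_mul_of_nonneg_left hDle (norm_nonneg ξ)
    _ = _ := by rw [weight_transverseSq, neg_add_eq_sub]; ring

theorem stmt11 {n : ℕ} (M s h : ℝ) (hM : 0 < M) (hs : 1 < s) (hh : 1 ≤ h)
    (χ : ℝ → ℝ) (hχsm : ContDiff ℝ (⊤ : ℕ∞) χ) (hχc : HasCompactSupport χ)
    (hχ0 : ∀ t, 0 ≤ χ t) (hχ1 : ∀ t, χ t ≤ 1) (hχ' : ∀ t, t * deriv χ t ≤ 0)
    (lam1 lam2 lamt : E n → E n → ℝ)
    (hlam1 : ∀ x ξ : E n, lam1 x ξ =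
      ∫ τ in (0:ℝ)..(⟪x, ‖ξ‖⁻¹ • ξ⟫),
        M * Real.sqrt (h ^ 2 + ‖x - τ • (‖ξ‖⁻¹ • ξ)‖ ^ 2) ^ (-1 + 1 / s))
    (hlam2 : ∀ x ξ : E n, lam2 x ξ =
      ∫ τ in (0:ℝ)..(⟪x, ‖ξ‖⁻¹ • ξ⟫),
        M * Real.sqrt (h ^ 2 + (⟪x - τ • (‖ξ‖⁻¹ • ξ), ‖ξ‖⁻¹ • ξ⟫ : ℝ) ^ 2) ^ (-1 + 1 / s))
    (hlamt : ∀ x ξ : E n, lamt x ξ =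
      -(lam1 x ξ) * χ (2 * ⟪x, ‖ξ‖⁻¹ • ξ⟫ / Real.sqrt (h ^ 2 + ‖x‖ ^ 2))
        - lam2 x ξ * (1 - χ (2 * ⟪x, ‖ξ‖⁻¹ • ξ⟫ / Real.sqrt (h ^ 2 + ‖x‖ ^ 2)))) :
    ∀ (x ξ : E n), ξ ≠ 0 →
      ∑ j : Fin n, fderiv ℝ (fun y => lamt y ξ) x (EuclideanSpace.single j 1) * ξ j
        ≤ -M * Real.sqrt (h ^ 2 + ‖x‖ ^ 2) ^ (1 / s - 1) * ‖ξ‖ :=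
  stmt11_general M s h hM hs hh χ hχsm hχ1 hχ' lam1 lam2 lamt hlam1 hlam2 hlamt
end
end

section
/- Fix κ > 1 and ζ > 0 and define m_{κ,ζ}(x) = ∑_{j=0}^∞ ζ^j ⟨x⟩^{2j} / (j!)^{2κ} for x ∈ ℝⁿ (⟨x⟩ = (1+|x|²)^{1/2}). Then for every ε > 0 there exists C = C(κ,ε) > 0 such that C^{-1} exp((2κ-ε) ζ^{1/(2κ)} ⟨x⟩^{1/κ}) ≤ m_{κ,ζ}(x) ≤ C exp((2κ+ε) ζ^{1/(2κ)} ⟨x⟩^{1/κ}) for all x ∈ ℝⁿ. -/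
open Real
open scoped BigOperators

noncomputable section

/-! With `u = ζ ^ (1 / (2κ)) ⟨x⟩ ^ (1 / κ)` and `p = 2κ`, the series is `∑ aⱼ ^ p` with
`aⱼ = uʲ / j!`, the terms of the exponential series of `u`. Since `p ≥ 1`, `∑ aⱼ ^ p ≤ (∑ aⱼ) ^ p
= exp (p u)`. Conversely, Hölder's inequality against the geometric weights `rʲ` (`r < 1`) gives
`exp (r u) = ∑ aⱼ rʲ ≤ (∑ aⱼ ^ p) ^ (1 / p) (1 - r ^ q) ^ (-1 / q)`, i.e. `m ≳ exp (r p u)`, and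
`r p` can be taken as close to `p` as we like. -/

open scoped Nat

section

variable {ι : Type*} {f : ι → ℝ} {p : ℝ}

lemma rpow_le_tsum_rpow_sub_one_mul (hf : ∀ i, 0 ≤ f i) (hs : Summable f) (hp : 1 ≤ p) (i : ι) :
    f i ^ p ≤ (∑' j, f j) ^ (p - 1) * f i := by
  calc f i ^ p = f i ^ (p - 1) * f i := by
        rw [← rpow_add_one' (hf i) (by linarith), sub_add_cancel]
    _ ≤ (∑' j, f j) ^ (p - 1) * f i :=
        mul_le_mul_of_nonneg_right
          (rpow_le_rpow (hf i) (hs.le_tsum i fun j _ => hf j) (by linarith)) (hf i)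

lemma summable_rpow_of_one_le (hf : ∀ i, 0 ≤ f i) (hs : Summable f) (hp : 1 ≤ p) :
    Summable fun i => f i ^ p :=
  .of_nonneg_of_le (fun i => rpow_nonneg (hf i) p) (rpow_le_tsum_rpow_sub_one_mul hf hs hp)
    (hs.mul_left _)

lemma tsum_rpow_le_rpow_tsum (hf : ∀ i, 0 ≤ f i) (hs : Summable f) (hp : 1 ≤ p) :
    ∑' i, f i ^ p ≤ (∑' i, f i) ^ p :=
  calc ∑' i, f i ^ p ≤ ∑' i, (∑' j, f j) ^ (p - 1) * f i :=
        Summable.tsum_le_tsum (rpow_le_tsum_rpow_sub_one_mul hf hs hp)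
          (summable_rpow_of_one_le hf hs hp) (hs.mul_left _)
    _ = (∑' i, f i) ^ p := by
        rw [tsum_mul_left, ← rpow_add_one' (tsum_nonneg hf) (by linarith), sub_add_cancel]

end

lemma rpow_tsum_mul_pow_le {a : ℕ → ℝ} {p q r : ℝ} (ha : ∀ j, 0 ≤ a j)
    (hpq : p.HolderConjugate q) (hs : Summable fun j => a j ^ p) (hr0 : 0 ≤ r) (hr1 : r < 1) :
    (1 - r ^ q) ^ (p - 1) * (∑' j, a j * r ^ j) ^ p ≤ ∑' j, a j ^ p := by
  have hgeom (j : ℕ) : (r ^ j) ^ q = (r ^ q) ^ j := (rpow_pow_comm hr0 q j).symm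
  have hrq0 : 0 ≤ r ^ q := rpow_nonneg hr0 q
  have hrq1 : r ^ q < 1 := rpow_lt_one hr0 hr1 hpq.symm.pos
  have hc : 0 < (1 - r ^ q) ^ (p - 1) := rpow_pos_of_pos (by linarith) _
  have hholder := inner_le_Lp_mul_Lq_tsum_of_nonneg hpq ha (fun j => pow_nonneg hr0 j) hs
    ((summable_geometric_of_lt_one hrq0 hrq1).congr fun j => (hgeom j).symm)
  rw [tsum_congr hgeom, tsum_geometric_of_lt_one hrq0 hrq1] at hholder
  have hpow := rpow_le_rpow (tsum_nonneg fun j => mul_nonneg (ha j) (pow_nonneg hr0 j))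
    hholder hpq.nonneg
  have hS : 0 ≤ ∑' j, a j ^ p := tsum_nonneg fun j => rpow_nonneg (ha j) p
  have hD : 0 ≤ (1 - r ^ q)⁻¹ := inv_nonneg.2 (by linarith)
  rw [mul_rpow (rpow_nonneg hS _) (rpow_nonneg hD _), ← rpow_mul hS, ← rpow_mul hD,
    one_div_mul_cancel hpq.ne_zero, rpow_one, one_div_mul_eq_div, hpq.div_conj_eq_sub_one,
    inv_rpow (by linarith)] at hpow
  rw [mul_comm]
  exact (le_mul_inv_iff₀ hc).1 hpow

section

variable {p : ℝ}

lemma tsum_pow_div_factorial (u : ℝ) : ∑' j : ℕ, u ^ j / j ! = exp u := by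
  rw [exp_eq_exp_ℝ, (NormedSpace.expSeries_div_hasSum_exp u).tsum_eq]

lemma pow_div_factorial_nonneg {u : ℝ} (hu : 0 ≤ u) (j : ℕ) : 0 ≤ u ^ j / j ! := by positivity

lemma tsum_pow_div_factorial_rpow_le_exp {u : ℝ} (hu : 0 ≤ u) (hp : 1 ≤ p) :
    ∑' j : ℕ, (u ^ j / j !) ^ p ≤ exp (p * u) := by
  have h := tsum_rpow_le_rpow_tsum (pow_div_factorial_nonneg hu)
    (summable_pow_div_factorial u) hp
  rwa [tsum_pow_div_factorial, ← exp_mul, mul_comm] at h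

lemma exists_mul_exp_le_tsum_pow_div_factorial_rpow (hp : 1 < p) {ε : ℝ} (hε : 0 < ε) :
    ∃ c > 0, c ≤ 1 ∧ ∀ u, 0 ≤ u → c * exp ((p - ε) * u) ≤ ∑' j : ℕ, (u ^ j / j !) ^ p := by
  have hpq := HolderConjugate.conjExponent hp
  set q := p.conjExponent
  set r := p / (p + ε)
  have hr0 : 0 ≤ r := by positivity
  have hr1 : r < 1 := (div_lt_one (by linarith)).2 (by linarith)
  have hrq : 0 < 1 - r ^ q := sub_pos.2 (rpow_lt_one hr0 hr1 hpq.symm.pos)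
  have hrp : p - ε ≤ r * p := by
    rw [div_mul_eq_mul_div, le_div_iff₀ (by linarith)]
    nlinarith
  refine ⟨(1 - r ^ q) ^ (p - 1), rpow_pos_of_pos hrq _,
    rpow_le_one hrq.le (by linarith [rpow_nonneg hr0 q]) (by linarith), fun u hu => ?_⟩
  have hexp : ∑' j : ℕ, u ^ j / j ! * r ^ j = exp (r * u) := by
    rw [← tsum_pow_div_factorial]
    exact tsum_congr fun j => by ring
  calc (1 - r ^ q) ^ (p - 1) * exp ((p - ε) * u)
      ≤ (1 - r ^ q) ^ (p - 1) * exp (r * u) ^ p := by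
        rw [← exp_mul]
        gcongr _ * exp ?_
        linarith [mul_le_mul_of_nonneg_right hrp hu]
    _ ≤ ∑' j : ℕ, (u ^ j / j !) ^ p := by
        rw [← hexp]
        exact rpow_tsum_mul_pow_le (pow_div_factorial_nonneg hu) hpq
          (summable_rpow_of_one_le (pow_div_factorial_nonneg hu) (summable_pow_div_factorial u)
            hp.le) hr0 hr1

lemma rpow_one_div_pow_div_factorial_rpow {y : ℝ} (hy : 0 ≤ y) (hp : p ≠ 0) (j : ℕ) :
    ((y ^ (1 / p)) ^ j / j !) ^ p = y ^ j / (j ! : ℝ) ^ p := by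
  rw [div_rpow (by positivity) (by positivity), ← rpow_pow_comm (by positivity), one_div,
    rpow_inv_rpow hy hp]

end

theorem stmt12 {n : ℕ} (κ ζ : ℝ) (hκ : 1 < κ) (hζ : 0 < ζ)
    (m : E n → ℝ)
    (hm : ∀ x : E n, m x =
      ∑' j : ℕ, ζ ^ j * Real.sqrt (1 + ‖x‖ ^ 2) ^ (2 * j) / (Nat.factorial j : ℝ) ^ (2 * κ)) :
    ∀ ε > 0, ∃ C > 0, ∀ x : E n,
      C⁻¹ * Real.exp ((2 * κ - ε) * ζ ^ (1 / (2 * κ)) * Real.sqrt (1 + ‖x‖ ^ 2) ^ (1 / κ))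
          ≤ m x
      ∧ m x ≤
        C * Real.exp ((2 * κ + ε) * ζ ^ (1 / (2 * κ)) * Real.sqrt (1 + ‖x‖ ^ 2) ^ (1 / κ)) := by
  intro ε hε
  obtain ⟨c, hc0, hc1, hlower⟩ :=
    exists_mul_exp_le_tsum_pow_div_factorial_rpow (p := 2 * κ) (by linarith) hε
  refine ⟨c⁻¹, inv_pos.2 hc0, fun x => ?_⟩
  set t := √(1 + ‖x‖ ^ 2)
  set u := ζ ^ (1 / (2 * κ)) * t ^ (1 / κ)
  have hu : 0 ≤ u := by positivity
  have hmx : m x = ∑' j : ℕ, (u ^ j / j !) ^ (2 * κ) := by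
    have hy : (ζ * t ^ 2) ^ (1 / (2 * κ)) = u := by
      rw [mul_rpow hζ.le (by positivity), ← rpow_natCast, ← rpow_mul (by positivity)]
      congr 2
      push_cast
      field_simp
    rw [hm x]
    refine tsum_congr fun j => ?_
    rw [← hy, rpow_one_div_pow_div_factorial_rpow (by positivity) (by positivity), mul_pow,
      pow_mul]
  rw [hmx, mul_assoc _ (ζ ^ _), mul_assoc _ (ζ ^ _), inv_inv]
  refine ⟨hlower u hu, ?_⟩
  calc ∑' j : ℕ, (u ^ j / j !) ^ (2 * κ) ≤ exp (2 * κ * u) :=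
        tsum_pow_div_factorial_rpow_le_exp hu (by linarith)
    _ ≤ exp ((2 * κ + ε) * u) := by gcongr; linarith
    _ ≤ c⁻¹ * exp ((2 * κ + ε) * u) :=
        le_mul_of_one_le_left (exp_pos _).le ((one_le_inv₀ hc0).2 hc1)
end
end

section
/- Let μ, ν > 1, s > μ+ν-1, and suppose a ∈ C^∞(ℝ^{2n}) satisfies for all multi-indices α, β, all N ∈ ℕ, and all (x,ξ) with ⟨ξ⟩⟨x⟩ ≥ BN^{μ+ν-1}: |∂_ξ^α∂_x^β a(x,ξ)| ≤ C A^{|α|+|β|+2N} (α!)^μ(β!)^ν (N!)^{μ+ν-1} ⟨ξ⟩^{-|α|-N}⟨x⟩^{-|β|-N} e^{c|x|^{1/s}} (constants A, B, C, c > 0 independent of α,β,N). Then there exist constants C', A', τ > 0 such that |∂_ξ^α∂_x^β a(x,ξ)| ≤ C' (A')^{|α|+|β|}(α!)^μ(β!)^ν exp(-(τ/2)(|x|^{1/(μ+ν-1)} + |ξ|^{1/(μ+ν-1)})) for all α, β and all (x,ξ) ∈ ℝ^{2n}. -/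
open Real
open scoped BigOperators

noncomputable section

/-- Multi-index factorial `γ! = γ₁!⋯γₙ!`. -/
def mfact {n : ℕ} (γ : Fin n → ℕ) : ℕ := ∏ i, Nat.factorial (γ i)

/-! With `P = ⟨ξ⟩⟨x⟩` and `σ = μ + ν - 1`, apply the hypothesis with the largest admissible order,
`N ≈ (P / L) ^ (1 / σ)` with `L = max B (e A²)`. Then `(N!) ^ σ ≤ N ^ (σ N) ≤ (P / L) ^ N`,
so the `N`-dependent factor `A ^ (2N) (N!) ^ σ P ^ (-N)` is at most `(A² / L) ^ N ≤ e ^ (-N)`, which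
is exponentially small in `P ^ (1 / σ) ≥ (|x| ^ (1 / σ) + |ξ| ^ (1 / σ)) / 2`. Since `1 / s < 1 / σ`,
the growth `e ^ (c |x| ^ (1 / s))` is absorbed by half of this decay. -/

open scoped Nat

lemma one_le_sqrt_one_add_sq (r : ℝ) : 1 ≤ √(1 + r ^ 2) :=
  Real.one_le_sqrt.mpr (le_add_of_nonneg_right (sq_nonneg r))

lemma le_sqrt_one_add_sq (r : ℝ) : r ≤ √(1 + r ^ 2) :=
  Real.le_sqrt_of_sq_le (by linarith)

lemma rpow_add_rpow_le_two_mul_rpow {r ρ : ℝ} (hr : 0 ≤ r) (hρ : 0 ≤ ρ) {p : ℝ} (hp : 0 ≤ p) :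
    r ^ p + ρ ^ p ≤ 2 * (√(1 + ρ ^ 2) * √(1 + r ^ 2)) ^ p := by
  have hr' : r ≤ √(1 + ρ ^ 2) * √(1 + r ^ 2) :=
    (le_sqrt_one_add_sq r).trans (le_mul_of_one_le_left (by positivity) (one_le_sqrt_one_add_sq ρ))
  have hρ' : ρ ≤ √(1 + ρ ^ 2) * √(1 + r ^ 2) :=
    (le_sqrt_one_add_sq ρ).trans (le_mul_of_one_le_right (by positivity) (one_le_sqrt_one_add_sq r))
  linarith [rpow_le_rpow hr hr' hp, rpow_le_rpow hρ hρ' hp]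

lemma rpow_neg_add_mul_rpow_neg_add_le {Ξ X k l N : ℝ} (hΞ : 1 ≤ Ξ) (hX : 1 ≤ X)
    (hk : 0 ≤ k) (hl : 0 ≤ l) :
    Ξ ^ (-(k + N)) * X ^ (-(l + N)) ≤ (Ξ * X) ^ (-N) := by
  rw [mul_rpow (by positivity) (by positivity)]
  exact mul_le_mul (rpow_le_rpow_of_exponent_le hΞ (by linarith))
    (rpow_le_rpow_of_exponent_le hX (by linarith)) (by positivity) (by positivity)

lemma exists_mul_rpow_le_mul_rpow_add {p q : ℝ} (hp : 0 ≤ p) (hpq : p < q) (c : ℝ) {ε : ℝ}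
    (hε : 0 < ε) : ∃ K, ∀ r : ℝ, 0 ≤ r → c * r ^ p ≤ ε * r ^ q + K := by
  set c' := max c 0
  set R := max 1 ((c' / ε) ^ (q - p)⁻¹)
  refine ⟨c' * R ^ p, fun r hr => ?_⟩
  have hc : c * r ^ p ≤ c' * r ^ p := by gcongr; exact le_max_left c 0
  have hεr : 0 ≤ ε * r ^ q := by positivity
  rcases le_total r R with hrR | hRr
  · have : c' * r ^ p ≤ c' * R ^ p := by gcongr
    linarith
  · have hr0 : 0 < r := lt_of_lt_of_le one_pos ((le_max_left _ _).trans hRr)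
    have hcr : c' ≤ ε * r ^ (q - p) := by
      rw [← div_le_iff₀' hε, ← rpow_inv_rpow (x := c' / ε) (by positivity) (sub_pos.mpr hpq).ne']
      exact rpow_le_rpow (by positivity) ((le_max_right _ _).trans hRr) (sub_pos.mpr hpq).le
    have : c' * r ^ p ≤ ε * r ^ q := by
      calc c' * r ^ p ≤ ε * r ^ (q - p) * r ^ p := by gcongr
        _ = ε * r ^ q := by rw [mul_assoc, ← rpow_add hr0, sub_add_cancel]
    linarith [show 0 ≤ c' * R ^ p by positivity]

lemma factorial_rpow_le_pow {σ T : ℝ} (hσ : 0 ≤ σ) {N : ℕ} (hN : (N : ℝ) ^ σ ≤ T) :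
    (N ! : ℝ) ^ σ ≤ T ^ N :=
  calc (N ! : ℝ) ^ σ ≤ ((N : ℝ) ^ N) ^ σ := by gcongr; exact_mod_cast N.factorial_le_pow
    _ = ((N : ℝ) ^ σ) ^ N := by
      rw [← rpow_natCast_mul N.cast_nonneg, ← rpow_mul_natCast N.cast_nonneg, mul_comm]
    _ ≤ T ^ N := by gcongr

lemma exists_nat_pow_mul_factorial_rpow_mul_rpow_neg_le {A L P σ : ℝ} (hσ : 0 < σ) (hL : 0 < L)
    (hAL : exp 1 * A ^ 2 ≤ L) (hP : 0 < P) :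
    ∃ N : ℕ, L * (N : ℝ) ^ σ ≤ P ∧
      A ^ (2 * N) * (N ! : ℝ) ^ σ * P ^ (-(N : ℝ)) ≤ exp 1 * exp (-(P / L) ^ (1 / σ)) := by
  set t := (P / L) ^ (1 / σ)
  set N := ⌊t⌋₊
  have hNσ : (N : ℝ) ^ σ ≤ P / L := by
    calc (N : ℝ) ^ σ ≤ t ^ σ := by gcongr; exact Nat.floor_le (by positivity)
      _ = P / L := by
        rw [← rpow_mul (by positivity), one_div_mul_cancel hσ.ne', rpow_one]
  refine ⟨N, by rwa [← le_div_iff₀' hL], ?_⟩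
  have hAL' : A ^ 2 / L ≤ (exp 1)⁻¹ := by
    rw [div_le_iff₀ hL, inv_mul_eq_div, le_div_iff₀' (exp_pos 1)]
    exact hAL
  calc A ^ (2 * N) * (N ! : ℝ) ^ σ * P ^ (-(N : ℝ))
      ≤ A ^ (2 * N) * (P / L) ^ N * (P ^ N)⁻¹ := by
        rw [rpow_neg hP.le, rpow_natCast]
        have := Even.pow_nonneg (even_two_mul N) A
        gcongr
        exact factorial_rpow_le_pow hσ.le hNσ
    _ = (A ^ 2 / L) ^ N := by
        rw [pow_mul, div_pow, div_pow]
        field_simp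
    _ ≤ ((exp 1)⁻¹) ^ N := by gcongr
    _ = exp (-N) := by rw [← exp_neg, ← exp_nat_mul, mul_neg_one]
    _ ≤ exp 1 * exp (-t) := by
        rw [← exp_add, exp_le_exp]
        linarith [Nat.sub_one_lt_floor t]

lemma exp_neg_rpow_mul_exp_le {r ρ p q c K τ : ℝ} (hr : 0 ≤ r) (hρ : 0 ≤ ρ) (hq : 0 ≤ q)
    (hτ : 0 ≤ τ) (hK : c * r ^ p ≤ τ / 2 * r ^ q + K) :
    exp (-(2 * τ * (√(1 + ρ ^ 2) * √(1 + r ^ 2)) ^ q)) * exp (c * r ^ p) ≤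
      exp K * exp (-(τ / 2) * (r ^ q + ρ ^ q)) := by
  have hsum := mul_le_mul_of_nonneg_left (rpow_add_rpow_le_two_mul_rpow hr hρ hq) hτ
  have hρq : 0 ≤ τ * ρ ^ q := by positivity
  rw [← exp_add, ← exp_add, exp_le_exp]
  linarith

theorem stmt18_general {n : ℕ} (μ ν s A B C c : ℝ) (hμ : 1 < μ) (hν : 1 < ν)
    (hs : μ + ν - 1 < s) (hA : 0 < A) (hC : 0 < C)
    (a : E n × E n → ℝ)
    (ha : ∀ (α β : Fin n → ℕ) (N : ℕ) (x ξ : E n),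
      B * (N : ℝ) ^ (μ + ν - 1) ≤ Real.sqrt (1 + ‖ξ‖ ^ 2) * Real.sqrt (1 + ‖x‖ ^ 2) →
      |mderivXi α (mderivX β a) (x, ξ)| ≤
        C * A ^ (∑ i, α i + ∑ i, β i + 2 * N) * (mfact α : ℝ) ^ μ * (mfact β : ℝ) ^ ν *
          (Nat.factorial N : ℝ) ^ (μ + ν - 1) *
          Real.sqrt (1 + ‖ξ‖ ^ 2) ^ (-((∑ i, α i : ℝ) + N)) *
          Real.sqrt (1 + ‖x‖ ^ 2) ^ (-((∑ i, β i : ℝ) + N)) *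
          Real.exp (c * ‖x‖ ^ (1 / s))) :
    ∃ C' A' τ : ℝ, 0 < C' ∧ 0 < A' ∧ 0 < τ ∧ ∀ (α β : Fin n → ℕ) (x ξ : E n),
      |mderivXi α (mderivX β a) (x, ξ)| ≤
        C' * A' ^ (∑ i, α i + ∑ i, β i) * (mfact α : ℝ) ^ μ * (mfact β : ℝ) ^ ν *
          Real.exp (-(τ / 2) *
            (‖x‖ ^ (1 / (μ + ν - 1)) + ‖ξ‖ ^ (1 / (μ + ν - 1)))) := by
  set σ := μ + ν - 1
  have hσ : 0 < σ := by linarith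
  set L := max B (exp 1 * A ^ 2)
  have hL : 0 < L := lt_max_of_lt_right (by positivity)
  set τ := (L ^ (1 / σ))⁻¹ / 2
  obtain ⟨K, hK⟩ := exists_mul_rpow_le_mul_rpow_add (one_div_pos.mpr (hσ.trans hs)).le
    (one_div_lt_one_div_of_lt hσ hs) c (by positivity : 0 < τ / 2)
  refine ⟨C * exp 1 * exp K, A, τ, by positivity, hA, by positivity, fun α β x ξ => ?_⟩
  set P := √(1 + ‖ξ‖ ^ 2) * √(1 + ‖x‖ ^ 2)
  have hP : 0 < P := mul_pos (sqrt_pos.mpr (by positivity)) (sqrt_pos.mpr (by positivity))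
  obtain ⟨N, hNP, hN⟩ := exists_nat_pow_mul_factorial_rpow_mul_rpow_neg_le hσ hL
    (le_max_right _ _) hP
  have hτP : (P / L) ^ (1 / σ) = 2 * τ * P ^ (1 / σ) := by
    rw [div_rpow hP.le hL.le, div_eq_inv_mul]
    ring
  have hdecay := exp_neg_rpow_mul_exp_le (norm_nonneg x) (norm_nonneg ξ)
    (by positivity : 0 ≤ 1 / σ) (by positivity : 0 ≤ τ) (hK ‖x‖ (norm_nonneg x))
  rw [← hτP] at hdecay
  calc |mderivXi α (mderivX β a) (x, ξ)|
      ≤ _ := ha α β N x ξ (le_trans (by gcongr; exact le_max_left _ _) hNP)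
    _ = C * A ^ (∑ i, α i + ∑ i, β i) * (mfact α : ℝ) ^ μ * (mfact β : ℝ) ^ ν *
          (A ^ (2 * N) * (N ! : ℝ) ^ σ * (√(1 + ‖ξ‖ ^ 2) ^ (-((∑ i, α i : ℝ) + N)) *
            √(1 + ‖x‖ ^ 2) ^ (-((∑ i, β i : ℝ) + N)))) * exp (c * ‖x‖ ^ (1 / s)) := by
        rw [pow_add]; ring
    _ ≤ C * A ^ (∑ i, α i + ∑ i, β i) * (mfact α : ℝ) ^ μ * (mfact β : ℝ) ^ ν *
          (A ^ (2 * N) * (N ! : ℝ) ^ σ * P ^ (-(N : ℝ))) * exp (c * ‖x‖ ^ (1 / s)) := by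
        gcongr
        exact rpow_neg_add_mul_rpow_neg_add_le (one_le_sqrt_one_add_sq _)
          (one_le_sqrt_one_add_sq _) (by positivity) (by positivity)
    _ ≤ C * A ^ (∑ i, α i + ∑ i, β i) * (mfact α : ℝ) ^ μ * (mfact β : ℝ) ^ ν *
          (exp 1 * exp (-(P / L) ^ (1 / σ))) * exp (c * ‖x‖ ^ (1 / s)) := by
        gcongr
    _ ≤ _ := by
        have := mul_le_mul_of_nonneg_left hdecay (by positivity : 0 ≤
          C * exp 1 * A ^ (∑ i, α i + ∑ i, β i) * (mfact α : ℝ) ^ μ * (mfact β : ℝ) ^ ν)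
        linarith

theorem stmt18 {n : ℕ} (μ ν s A B C c : ℝ) (hμ : 1 < μ) (hν : 1 < ν)
    (hs : μ + ν - 1 < s) (hA : 0 < A) (hB : 0 < B) (hC : 0 < C) (hc : 0 < c)
    (a : E n × E n → ℝ)
    (ha : ∀ (α β : Fin n → ℕ) (N : ℕ) (x ξ : E n),
      B * (N : ℝ) ^ (μ + ν - 1) ≤ Real.sqrt (1 + ‖ξ‖ ^ 2) * Real.sqrt (1 + ‖x‖ ^ 2) →
      |mderivXi α (mderivX β a) (x, ξ)| ≤
        C * A ^ (∑ i, α i + ∑ i, β i + 2 * N) * (mfact α : ℝ) ^ μ * (mfact β : ℝ) ^ ν *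
          (Nat.factorial N : ℝ) ^ (μ + ν - 1) *
          Real.sqrt (1 + ‖ξ‖ ^ 2) ^ (-((∑ i, α i : ℝ) + N)) *
          Real.sqrt (1 + ‖x‖ ^ 2) ^ (-((∑ i, β i : ℝ) + N)) *
          Real.exp (c * ‖x‖ ^ (1 / s))) :
    ∃ C' A' τ : ℝ, 0 < C' ∧ 0 < A' ∧ 0 < τ ∧ ∀ (α β : Fin n → ℕ) (x ξ : E n),
      |mderivXi α (mderivX β a) (x, ξ)| ≤
        C' * A' ^ (∑ i, α i + ∑ i, β i) * (mfact α : ℝ) ^ μ * (mfact β : ℝ) ^ ν *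
          Real.exp (-(τ / 2) *
            (‖x‖ ^ (1 / (μ + ν - 1)) + ‖ξ‖ ^ (1 / (μ + ν - 1)))) :=
  stmt18_general μ ν s A B C c hμ hν hs hA hC a ha
end
end
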